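/- arXiv:2312.04091 — 4 statements merged into one kernel-verified Lean document; each statement's English description precedes it below -/
import Mathlib

section
/- Bottom-top analysis, part 2. Let Θ₁, Θ₂ be sequences of formulas such that the concatenation Θ₁,Θ₂ equals Γ,Ψ, where Γ is a sequence of primitive formulas and Ψ = (b\E), Ψ′ is a locked sequence whose first formula is b\E; assume the primitive formula b does not occur in Γ. Consider the sequent S = (Θ₁, A, Θ₂ ⊢ a_L·ok) in the fragment of ACTωm without 0, 1, / and ∨. Then: (a) if A = ∇B, then S is derivable iff Ξ₁, B, Ξ₂ ⊢ a_L·ok is derivable for some Ξ₁, Ξ₂ with Ξ₁,Ξ₂ = Θ₁,Θ₂; (b) if A = p_m\…\p₁\B with p₁,…,p_m primitive (bracketed as p_m\(p_{m-1}\(…\(p₁\B)…))), then S is derivable iff Θ₁ = Θ₁′, p₁, …, p_m for some Θ₁′ and Θ₁′, B, Θ₂ ⊢ a_L·ok is derivable. -/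
set_option linter.unusedVariables false
set_option linter.unnecessarySeqFocus false
set_option maxHeartbeats 1000000

inductive Fm : Type where
  | atom : ℕ → Fm
  | zero : Fm
  | one : Fm
  | lDiv : Fm → Fm → Fm   -- `lDiv B A` is B \ A
  | rDiv : Fm → Fm → Fm   -- `rDiv A B` is A / B
  | mul : Fm → Fm → Fm
  | and : Fm → Fm → Fm
  | or : Fm → Fm → Fm
  | bang : Fm → Fm
  | nabla : Fm → Fm
  | star : Fm → Fm
  deriving DecidableEq

/-- Derivability in infinitary action logic with multiplexing ACTωm. -/
inductive Deriv : List Fm → Fm → Prop where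
  | ax (A : Fm) : Deriv [A] A
  | lDivL (Γ Pi Δ : List Fm) (A B C : Fm) :
      Deriv (Γ ++ [A] ++ Δ) C → Deriv Pi B → Deriv (Γ ++ Pi ++ [Fm.lDiv B A] ++ Δ) C
  | lDivR (Pi : List Fm) (A B : Fm) :
      Deriv (B :: Pi) A → Deriv Pi (Fm.lDiv B A)
  | rDivL (Γ Pi Δ : List Fm) (A B C : Fm) :
      Deriv (Γ ++ [A] ++ Δ) C → Deriv Pi B → Deriv (Γ ++ [Fm.rDiv A B] ++ Pi ++ Δ) C
  | rDivR (Pi : List Fm) (A B : Fm) :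
      Deriv (Pi ++ [B]) A → Deriv Pi (Fm.rDiv A B)
  | mulL (Γ Δ : List Fm) (A B C : Fm) :
      Deriv (Γ ++ [A, B] ++ Δ) C → Deriv (Γ ++ [Fm.mul A B] ++ Δ) C
  | mulR (Γ Δ : List Fm) (A B : Fm) :
      Deriv Γ A → Deriv Δ B → Deriv (Γ ++ Δ) (Fm.mul A B)
  | andL1 (Γ Δ : List Fm) (A₁ A₂ C : Fm) :
      Deriv (Γ ++ [A₁] ++ Δ) C → Deriv (Γ ++ [Fm.and A₁ A₂] ++ Δ) C
  | andL2 (Γ Δ : List Fm) (A₁ A₂ C : Fm) :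
      Deriv (Γ ++ [A₂] ++ Δ) C → Deriv (Γ ++ [Fm.and A₁ A₂] ++ Δ) C
  | andR (Pi : List Fm) (A₁ A₂ : Fm) :
      Deriv Pi A₁ → Deriv Pi A₂ → Deriv Pi (Fm.and A₁ A₂)
  | orL (Γ Δ : List Fm) (A₁ A₂ C : Fm) :
      Deriv (Γ ++ [A₁] ++ Δ) C → Deriv (Γ ++ [A₂] ++ Δ) C →
      Deriv (Γ ++ [Fm.or A₁ A₂] ++ Δ) C
  | orR1 (Pi : List Fm) (A₁ A₂ : Fm) : Deriv Pi A₁ → Deriv Pi (Fm.or A₁ A₂)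
  | orR2 (Pi : List Fm) (A₁ A₂ : Fm) : Deriv Pi A₂ → Deriv Pi (Fm.or A₁ A₂)
  | zeroL (Γ Δ : List Fm) (C : Fm) : Deriv (Γ ++ [Fm.zero] ++ Δ) C
  | oneL (Γ Δ : List Fm) (C : Fm) : Deriv (Γ ++ Δ) C → Deriv (Γ ++ [Fm.one] ++ Δ) C
  | oneR : Deriv [] Fm.one
  | bangL (n : ℕ) (Γ Δ : List Fm) (A B : Fm) :
      Deriv (Γ ++ List.replicate n A ++ Δ) B → Deriv (Γ ++ [Fm.bang A] ++ Δ) B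
  | bangR (A B : Fm) : Deriv [A] B → Deriv [Fm.bang A] (Fm.bang B)
  | starL (Γ Δ : List Fm) (A B : Fm) :
      (∀ n : ℕ, Deriv (Γ ++ List.replicate n A ++ Δ) B) → Deriv (Γ ++ [Fm.star A] ++ Δ) B
  | starR (Ps : List (List Fm)) (A : Fm) :
      (∀ Pi ∈ Ps, Deriv Pi A) → Deriv Ps.flatten (Fm.star A)
  | nablaL (Γ Δ : List Fm) (A B : Fm) :
      Deriv (Γ ++ [A] ++ Δ) B → Deriv (Γ ++ [Fm.nabla A] ++ Δ) B
  | nablaR (A B : Fm) : Deriv [A] B → Deriv [Fm.nabla A] (Fm.nabla B)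
  | nablaP1 (Γ Pi Δ : List Fm) (A B : Fm) :
      Deriv (Γ ++ Pi ++ [Fm.nabla A] ++ Δ) B → Deriv (Γ ++ [Fm.nabla A] ++ Pi ++ Δ) B
  | nablaP2 (Γ Pi Δ : List Fm) (A B : Fm) :
      Deriv (Γ ++ [Fm.nabla A] ++ Pi ++ Δ) B → Deriv (Γ ++ Pi ++ [Fm.nabla A] ++ Δ) B

/-- Fixed pairwise distinct primitive formulas used throughout the construction. -/
def aL : Fm := Fm.atom 0
def aR : Fm := Fm.atom 1
def a1F : Fm := Fm.atom 2
def a2F : Fm := Fm.atom 3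
def aSig : Fm := Fm.atom 4
def aPiF : Fm := Fm.atom 5
def okF : Fm := Fm.atom 6
def goF : Fm := Fm.atom 7
def waitF : Fm := Fm.atom 8
def failF : Fm := Fm.atom 9
def finF : Fm := Fm.atom 10
def energyF : Fm := Fm.atom 11

/-- `F` is a primitive formula. -/
def Fm.IsPrim (F : Fm) : Prop := ∃ p : ℕ, F = Fm.atom p

/-- A formula is locked if it is of the form `p\A` or `(p\B)∧(q\C)` with `p, q` primitive. -/
def Locked (F : Fm) : Prop :=
  (∃ (p : ℕ) (A : Fm), F = Fm.lDiv (Fm.atom p) A) ∨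
  (∃ (p q : ℕ) (B C : Fm), F = Fm.and (Fm.lDiv (Fm.atom p) B) (Fm.lDiv (Fm.atom q) C))

/-- A sequence of formulas is locked if each of its members is locked. -/
def LockedSeq (Ψ : List Fm) : Prop := ∀ F ∈ Ψ, Locked F

/-- A sequence consisting of primitive formulas. -/
def PrimSeq (Γ : List Fm) : Prop := ∀ F ∈ Γ, F.IsPrim

/-- The formula `OK := ok\ok`. -/
def OKF : Fm := Fm.lDiv okF okF

/-- `[B]? A := B\(B·A)`. -/
def qm (B A : Fm) : Fm := Fm.lDiv B (Fm.mul B A)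

/-- `[B]→ A := B\(A·B)`. -/
def ra (B A : Fm) : Fm := Fm.lDiv B (Fm.mul A B)

/-- Iterated left division `p_m\(…\(p₁\B)…)` where `ps = [p₁, …, p_m]`. -/
def lDivFold (ps : List ℕ) (B : Fm) : Fm :=
  ps.foldl (fun acc p => Fm.lDiv (Fm.atom p) acc) B

section Helpers

/-- Split a list equation at a marked element. -/
lemma cons_split {α : Type*} {L₁ L₂ M₁ M₂ : List α} {f : α}
    (h : L₁ ++ [f] ++ L₂ = M₁ ++ M₂) :
    (∃ t, M₁ = L₁ ++ [f] ++ t ∧ L₂ = t ++ M₂) ∨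
    (∃ t, L₁ = M₁ ++ t ∧ M₂ = t ++ [f] ++ L₂) := by
  rw [List.append_assoc] at h
  rcases List.append_eq_append_iff.mp h with ⟨a', ha, hb⟩ | ⟨c', hc, hd⟩
  · rcases a' with _ | ⟨x, t⟩
    · right; exact ⟨[], by simpa using ha.symm, by simpa using hb.symm⟩
    · left
      simp only [List.cons_append, List.cons.injEq] at hb
      exact ⟨t, by rw [ha, hb.1]; simp, hb.2⟩
  · right; exact ⟨c', hc, by simpa using hd⟩

lemma ins_split {α : Type*} {Ξ₁ Ξ₂ P Q : List α} {c : α} (h : P ++ [c] ++ Q = Ξ₁ ++ Ξ₂) :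
    (∃ t, Ξ₁ = P ++ [c] ++ t ∧ Q = t ++ Ξ₂) ∨
    (∃ t, P = Ξ₁ ++ t ∧ Ξ₂ = t ++ [c] ++ Q) := cons_split h

/-- Locate a marked element in a five-segment list. -/
lemma locate5 {α : Type*} {L₁ L₂ : List α} {f x : α} {A B C D : List α}
    (h : L₁ ++ [f] ++ L₂ = A ++ B ++ [x] ++ C ++ D) :
    (∃ A₁ A₂, A = A₁ ++ [f] ++ A₂ ∧ L₁ = A₁ ∧ L₂ = A₂ ++ B ++ [x] ++ C ++ D) ∨
    (∃ B₁ B₂, B = B₁ ++ [f] ++ B₂ ∧ L₁ = A ++ B₁ ∧ L₂ = B₂ ++ [x] ++ C ++ D) ∨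
    (f = x ∧ L₁ = A ++ B ∧ L₂ = C ++ D) ∨
    (∃ C₁ C₂, C = C₁ ++ [f] ++ C₂ ∧ L₁ = A ++ B ++ [x] ++ C₁ ∧ L₂ = C₂ ++ D) ∨
    (∃ D₁ D₂, D = D₁ ++ [f] ++ D₂ ∧ L₁ = A ++ B ++ [x] ++ C ++ D₁ ∧ L₂ = D₂) := by
  have h0 : L₁ ++ [f] ++ L₂ = A ++ (B ++ [x] ++ C ++ D) := by rw [h]; simp
  rcases cons_split h0 with ⟨t, ht1, ht2⟩ | ⟨t, ht1, ht2⟩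
  · exact Or.inl ⟨L₁, t, ht1, rfl, by rw [ht2]; simp⟩
  · have h1 : t ++ [f] ++ L₂ = B ++ ([x] ++ C ++ D) := by rw [← ht2]; simp
    rcases cons_split h1 with ⟨u, hu1, hu2⟩ | ⟨u, hu1, hu2⟩
    · exact Or.inr (Or.inl ⟨t, u, hu1, by rw [ht1], by rw [hu2]; simp⟩)
    · rcases u with _ | ⟨y, u⟩
      · simp only [List.nil_append, List.cons_append, List.cons.injEq, List.singleton_append] at hu2
        obtain ⟨rfl, hCD⟩ := hu2
        exact Or.inr (Or.inr (Or.inl ⟨rfl, by rw [ht1, hu1]; simp, hCD.symm⟩))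
      · simp only [List.cons_append, List.cons.injEq, List.singleton_append,
          List.append_assoc] at hu2
        obtain ⟨rfl, hCD⟩ := hu2
        have h2 : u ++ [f] ++ L₂ = C ++ D := by simpa using hCD.symm
        rcases cons_split h2 with ⟨v, hv1, hv2⟩ | ⟨v, hv1, hv2⟩
        · refine Or.inr (Or.inr (Or.inr (Or.inl ⟨u, v, hv1, ?_, ?_⟩)))
          · rw [ht1, hu1]; simp
          · simp [hv2]
        · refine Or.inr (Or.inr (Or.inr (Or.inr ⟨v, L₂, by simp [hv2], ?_, rfl⟩)))
          rw [ht1, hu1, hv1]; simp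

/-- Atoms different from `b`. -/
def ANB (b : ℕ) (Φ : List Fm) : Prop := ∀ F ∈ Φ, ∃ n, F = Fm.atom n ∧ n ≠ b

def OkC (C : Fm) : Prop := (∃ q, C = Fm.atom q) ∨ C = Fm.mul aL okF

structure QG (b : ℕ) (E : Fm) (Φ₁ S₁ Φ₂ S₂ : List Fm) : Prop where
  a1 : ANB b Φ₁
  a2 : ANB b Φ₂
  l1 : LockedSeq S₁
  l2 : LockedSeq S₂
  c3 : S₁ ≠ [] → Φ₂ = []
  c4 : ∀ ψ S', S₁ = ψ :: S' → Φ₁ = [] ∨ ψ = Fm.lDiv (Fm.atom b) E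
  c5 : ∀ ψ S', S₂ = ψ :: S' → (Φ₁ = [] ∧ Φ₂ = []) ∨ S₁ ≠ [] ∨ ψ = Fm.lDiv (Fm.atom b) E

lemma ANB.sub {b Φ Φ'} (h : ANB b Φ) (hs : ∀ x ∈ Φ', x ∈ Φ) : ANB b Φ' := fun F hF => h F (hs F hF)
lemma LockedSeq.sub {Φ Φ' : List Fm} (h : LockedSeq Φ) (hs : ∀ x ∈ Φ', x ∈ Φ) : LockedSeq Φ' :=
  fun F hF => h F (hs F hF)

lemma not_locked_atom {n : ℕ} (h : Locked (Fm.atom n)) : False := by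
  rcases h with ⟨p, A, h⟩ | ⟨p, q, B, C, h⟩ <;> simp at h

lemma glue {α : Type*} {L₁ L₂ R : List α} (h : L₁ ++ L₂ = R) (X Y : List α) :
    (X ++ L₁) ++ (L₂ ++ Y) = X ++ R ++ Y := by rw [← h]; simp

lemma glueR {α : Type*} {L₁ L₂ R : List α} (h : L₁ ++ L₂ = R) (Y : List α) :
    L₁ ++ (L₂ ++ Y) = R ++ Y := by rw [← h]; simp

lemma glueL {α : Type*} {L₁ L₂ R : List α} (h : L₁ ++ L₂ = R) (X : List α) :
    (X ++ L₁) ++ L₂ = X ++ R := by rw [← h]; simp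

end Helpers
section LemU

lemma shape2 {b : ℕ} {Φ S : List Fm} (hA : ANB b Φ) (hL : LockedSeq S) {f} (hf : f ∈ Φ ++ S) :
    (∃ n, f = Fm.atom n) ∨ (∃ A B, f = Fm.lDiv A B) ∨ (∃ A B, f = Fm.and A B) := by
  rcases List.mem_append.mp hf with h | h
  · obtain ⟨n, rfl, -⟩ := hA _ h; exact Or.inl ⟨n, rfl⟩
  · rcases hL _ h with ⟨p, A, rfl⟩ | ⟨p, q, B, C, rfl⟩
    · exact Or.inr (Or.inl ⟨_, _, rfl⟩)
    · exact Or.inr (Or.inr ⟨_, _, rfl⟩)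

lemma lemU (b : ℕ) (E : Fm) :
    ∀ {Λ C}, Deriv Λ C → ∀ q (Φ S : List Fm), C = Fm.atom q → Λ = Φ ++ S →
      ANB b Φ → LockedSeq S →
      (∀ ψ S', S = ψ :: S' → Φ = [] ∨ ψ = Fm.lDiv (Fm.atom b) E) →
      Λ = [Fm.atom q] := by
  intro Λ C h
  induction h with
  | ax A => intro q Φ S hC hΛ hA hL hHd; rw [hC]
  | lDivL Γ Pi Δ A B C h1 h2 ih1 ih2 =>
    intro q Φ S hC hΛ hA hL hHd
    rcases cons_split hΛ with ⟨t, ht1, ht2⟩ | ⟨t, ht1, ht2⟩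
    · obtain ⟨n, hn, -⟩ := hA (Fm.lDiv B A) (by rw [ht1]; simp)
      simp at hn
    · have hmem : Fm.lDiv B A ∈ S := by rw [ht2]; simp
      have hBr : ∃ r, B = Fm.atom r := by
        rcases hL _ hmem with ⟨r, A', hEq⟩ | ⟨p', q', B', C', hEq⟩
        · injection hEq with hh1 hh2; exact ⟨r, hh1⟩
        · simp at hEq
      obtain ⟨r, rfl⟩ := hBr
      rcases List.append_eq_append_iff.mp ht1 with ⟨u, hu1, hu2⟩ | ⟨u, hu1, hu2⟩
      · -- Φ = Γ ++ u, Pi = u ++ t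
        have hPi : Pi = [Fm.atom r] := by
          refine ih2 r u t rfl hu2 (hA.sub ?_) (hL.sub ?_) ?_
          · intro x hx; rw [hu1]; simp [hx]
          · intro x hx; rw [ht2]; simp [hx]
          · intro ψ S' hS'
            rcases hHd ψ (S' ++ [Fm.lDiv (Fm.atom r) A] ++ Δ) (by rw [ht2, hS']; simp) with hΦ | hE
            · left; rw [hΦ] at hu1; rcases (List.append_eq_nil_iff.mp hu1.symm) with ⟨-, h⟩; exact h
            · right; exact hE
        rcases u with _ | ⟨a, u⟩
        · have ht' : t = [Fm.atom r] := by simpa using hu2.symm.trans hPi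
          have hmem' : Fm.atom r ∈ S := by rw [ht2, ht']; simp
          exact absurd (hL _ hmem') not_locked_atom
        · have : a = Fm.atom r ∧ u ++ t = [] := by
            have := hu2.symm.trans hPi; simpa using this
          obtain ⟨rfl, h0⟩ := this
          have ht0 : t = [] := (List.append_eq_nil_iff.mp h0).2
          rcases hHd (Fm.lDiv (Fm.atom r) A) Δ (by rw [ht2, ht0]; simp) with hΦ | hE
          · rw [hΦ] at hu1; simp at hu1
          · have hrb : r = b := by simpa using congrArg (fun F => match F with
              | Fm.lDiv (Fm.atom n) _ => n | _ => 0) hE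
            obtain ⟨n, hn, hnb⟩ := hA (Fm.atom r) (by rw [hu1]; simp)
            rw [hrb] at hn; simp at hn; exact absurd hn.symm hnb
      · -- Γ = Φ ++ u, t = u ++ Pi
        have hPi : Pi = [Fm.atom r] := by
          refine ih2 r [] Pi rfl (by simp) (by intro x hx; simp at hx) (hL.sub ?_) ?_
          · intro x hx; rw [ht2, hu2]; simp [hx]
          · intro ψ S' h; left; rfl
        have hmem' : Fm.atom r ∈ S := by rw [ht2, hu2, hPi]; simp
        exact absurd (hL _ hmem') not_locked_atom
  | lDivR Pi A B h ih => intro q Φ S hC; simp at hC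
  | rDivL Γ Pi Δ A B C h1 h2 ih1 ih2 =>
    intro q Φ S hC hΛ hA hL hHd
    have hm : Fm.rDiv A B ∈ Φ ++ S := by rw [← hΛ]; simp
    rcases shape2 hA hL hm with ⟨n, h⟩ | ⟨x, y, h⟩ | ⟨x, y, h⟩ <;> simp at h
  | rDivR Pi A B h ih => intro q Φ S hC; simp at hC
  | mulL Γ Δ A B C h ih =>
    intro q Φ S hC hΛ hA hL hHd
    have hm : Fm.mul A B ∈ Φ ++ S := by rw [← hΛ]; simp
    rcases shape2 hA hL hm with ⟨n, h⟩ | ⟨x, y, h⟩ | ⟨x, y, h⟩ <;> simp at h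
  | mulR Γ Δ A B h1 h2 ih1 ih2 => intro q Φ S hC; simp at hC
  | andL1 Γ Δ A₁ A₂ C h ih =>
    intro q Φ S hC hΛ hA hL hHd
    rcases cons_split hΛ with ⟨t, ht1, ht2⟩ | ⟨t, ht1, ht2⟩
    · obtain ⟨n, hn, -⟩ := hA (Fm.and A₁ A₂) (by rw [ht1]; simp)
      simp at hn
    · have hmem : Fm.and A₁ A₂ ∈ S := by rw [ht2]; simp
      have h12 : Locked A₁ ∧ Locked A₂ := by
        rcases hL _ hmem with ⟨r, A', hEq⟩ | ⟨p', q', B', C', hEq⟩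
        · simp at hEq
        · simp only [Fm.and.injEq] at hEq
          exact ⟨Or.inl ⟨p', B', hEq.1⟩, Or.inl ⟨q', C', hEq.2⟩⟩
      have hres : Γ ++ [A₁] ++ Δ = [Fm.atom q] := by
        refine ih q Φ (t ++ [A₁] ++ Δ) hC (by rw [ht1]; simp) hA ?_ ?_
        · intro x hx
          simp only [List.mem_append, List.mem_singleton] at hx
          rcases hx with (hx | rfl) | hx
          · exact hL _ (by rw [ht2]; simp [hx])
          · exact h12.1
          · exact hL _ (by rw [ht2]; simp [hx])
        · intro ψ S' hS'
          rcases t with _ | ⟨c, t⟩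
          · simp at hS'
            rcases hHd (Fm.and A₁ A₂) Δ (by rw [ht2]; simp) with hΦ | hE
            · exact Or.inl hΦ
            · simp at hE
          · simp only [List.cons_append, List.cons.injEq] at hS'
            exact hS'.1 ▸ hHd c (t ++ [Fm.and A₁ A₂] ++ Δ) (by rw [ht2]; simp)
      have : A₁ ∈ [Fm.atom q] := by rw [← hres]; simp
      simp at this
      rcases h12.1 with ⟨r, A', hEq⟩ | ⟨p', q', B', C', hEq⟩ <;> rw [this] at hEq <;> simp at hEq
  | andL2 Γ Δ A₁ A₂ C h ih =>
    intro q Φ S hC hΛ hA hL hHd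
    rcases cons_split hΛ with ⟨t, ht1, ht2⟩ | ⟨t, ht1, ht2⟩
    · obtain ⟨n, hn, -⟩ := hA (Fm.and A₁ A₂) (by rw [ht1]; simp)
      simp at hn
    · have hmem : Fm.and A₁ A₂ ∈ S := by rw [ht2]; simp
      have h12 : Locked A₁ ∧ Locked A₂ := by
        rcases hL _ hmem with ⟨r, A', hEq⟩ | ⟨p', q', B', C', hEq⟩
        · simp at hEq
        · simp only [Fm.and.injEq] at hEq
          exact ⟨Or.inl ⟨p', B', hEq.1⟩, Or.inl ⟨q', C', hEq.2⟩⟩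
      have hres : Γ ++ [A₂] ++ Δ = [Fm.atom q] := by
        refine ih q Φ (t ++ [A₂] ++ Δ) hC (by rw [ht1]; simp) hA ?_ ?_
        · intro x hx
          simp only [List.mem_append, List.mem_singleton] at hx
          rcases hx with (hx | rfl) | hx
          · exact hL _ (by rw [ht2]; simp [hx])
          · exact h12.2
          · exact hL _ (by rw [ht2]; simp [hx])
        · intro ψ S' hS'
          rcases t with _ | ⟨c, t⟩
          · simp at hS'
            rcases hHd (Fm.and A₁ A₂) Δ (by rw [ht2]; simp) with hΦ | hE
            · exact Or.inl hΦ
            · simp at hE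
          · simp only [List.cons_append, List.cons.injEq] at hS'
            exact hS'.1 ▸ hHd c (t ++ [Fm.and A₁ A₂] ++ Δ) (by rw [ht2]; simp)
      have : A₂ ∈ [Fm.atom q] := by rw [← hres]; simp
      simp at this
      rcases h12.2 with ⟨r, A', hEq⟩ | ⟨p', q', B', C', hEq⟩ <;> rw [this] at hEq <;> simp at hEq
  | andR Pi A₁ A₂ h1 h2 ih1 ih2 => intro q Φ S hC; simp at hC
  | orL Γ Δ A₁ A₂ C h1 h2 ih1 ih2 =>
    intro q Φ S hC hΛ hA hL hHd
    have hm : Fm.or A₁ A₂ ∈ Φ ++ S := by rw [← hΛ]; simp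
    rcases shape2 hA hL hm with ⟨n, h⟩ | ⟨x, y, h⟩ | ⟨x, y, h⟩ <;> simp at h
  | orR1 Pi A₁ A₂ h ih => intro q Φ S hC; simp at hC
  | orR2 Pi A₁ A₂ h ih => intro q Φ S hC; simp at hC
  | zeroL Γ Δ C =>
    intro q Φ S hC hΛ hA hL hHd
    have hm : Fm.zero ∈ Φ ++ S := by rw [← hΛ]; simp
    rcases shape2 hA hL hm with ⟨n, h⟩ | ⟨x, y, h⟩ | ⟨x, y, h⟩ <;> simp at h
  | oneL Γ Δ C h ih =>
    intro q Φ S hC hΛ hA hL hHd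
    have hm : Fm.one ∈ Φ ++ S := by rw [← hΛ]; simp
    rcases shape2 hA hL hm with ⟨n, h⟩ | ⟨x, y, h⟩ | ⟨x, y, h⟩ <;> simp at h
  | oneR => intro q Φ S hC; simp at hC
  | bangL n Γ Δ A B h ih =>
    intro q Φ S hC hΛ hA hL hHd
    have hm : Fm.bang A ∈ Φ ++ S := by rw [← hΛ]; simp
    rcases shape2 hA hL hm with ⟨n, h⟩ | ⟨x, y, h⟩ | ⟨x, y, h⟩ <;> simp at h
  | bangR A B h ih => intro q Φ S hC; simp at hC
  | starL Γ Δ A B h ih =>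
    intro q Φ S hC hΛ hA hL hHd
    have hm : Fm.star A ∈ Φ ++ S := by rw [← hΛ]; simp
    rcases shape2 hA hL hm with ⟨n, h⟩ | ⟨x, y, h⟩ | ⟨x, y, h⟩ <;> simp at h
  | starR Ps A h ih => intro q Φ S hC; simp at hC
  | nablaL Γ Δ A B h ih =>
    intro q Φ S hC hΛ hA hL hHd
    have hm : Fm.nabla A ∈ Φ ++ S := by rw [← hΛ]; simp
    rcases shape2 hA hL hm with ⟨n, h⟩ | ⟨x, y, h⟩ | ⟨x, y, h⟩ <;> simp at h
  | nablaR A B h ih => intro q Φ S hC; simp at hC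
  | nablaP1 Γ Pi Δ A B h ih =>
    intro q Φ S hC hΛ hA hL hHd
    have hm : Fm.nabla A ∈ Φ ++ S := by rw [← hΛ]; simp
    rcases shape2 hA hL hm with ⟨n, h⟩ | ⟨x, y, h⟩ | ⟨x, y, h⟩ <;> simp at h
  | nablaP2 Γ Pi Δ A B h ih =>
    intro q Φ S hC hΛ hA hL hHd
    have hm : Fm.nabla A ∈ Φ ++ S := by rw [← hΛ]; simp
    rcases shape2 hA hL hm with ⟨n, h⟩ | ⟨x, y, h⟩ | ⟨x, y, h⟩ <;> simp at h

end LemU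
section LemM

lemma append_singleton {α : Type*} {u t : List α} {x : α} (h : u ++ t = [x]) :
    (u = [] ∧ t = [x]) ∨ (u = [x] ∧ t = []) := by
  cases u with
  | nil => simp_all
  | cons a u' => right; simp_all [List.append_eq_nil_iff]

lemma mem_of_split {L L₁ L₂ : List Fm} {f : Fm} (h : L = L₁ ++ [f] ++ L₂) : f ∈ L := by
  rw [h]; simp

lemma shapeQ {b p : ℕ} {E X : Fm} {Φ₁ S₁ Φ₂ S₂ : List Fm}
    (hQ : QG b E Φ₁ S₁ Φ₂ S₂) {f : Fm}
    (hf : f ∈ Φ₁ ++ S₁ ++ [Fm.lDiv (Fm.atom p) X] ++ Φ₂ ++ S₂) :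
    (∃ n, f = Fm.atom n) ∨ (∃ A B, f = Fm.lDiv A B) ∨ (∃ A B, f = Fm.and A B) := by
  simp only [List.mem_append, List.mem_singleton] at hf
  rcases hf with (((h | h) | rfl) | h) | h
  · obtain ⟨n, rfl, -⟩ := hQ.a1 _ h; exact Or.inl ⟨n, rfl⟩
  · rcases hQ.l1 _ h with ⟨r, A, rfl⟩ | ⟨r, s, B, C, rfl⟩
    · exact Or.inr (Or.inl ⟨_, _, rfl⟩)
    · exact Or.inr (Or.inr ⟨_, _, rfl⟩)
  · exact Or.inr (Or.inl ⟨_, _, rfl⟩)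
  · obtain ⟨n, rfl, -⟩ := hQ.a2 _ h; exact Or.inl ⟨n, rfl⟩
  · rcases hQ.l2 _ h with ⟨r, A, rfl⟩ | ⟨r, s, B, C, rfl⟩
    · exact Or.inr (Or.inl ⟨_, _, rfl⟩)
    · exact Or.inr (Or.inr ⟨_, _, rfl⟩)

/-- The key inversion lemma for a formula `p \ X` in a primitive/locked context. -/
lemma lemM (b p : ℕ) (E X : Fm) :
    ∀ {Λ C}, Deriv Λ C → ∀ (Φ₁ S₁ Φ₂ S₂ : List Fm),
      Λ = Φ₁ ++ S₁ ++ [Fm.lDiv (Fm.atom p) X] ++ Φ₂ ++ S₂ →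
      QG b E Φ₁ S₁ Φ₂ S₂ → OkC C →
      S₁ = [] ∧ ∃ Φ', Φ₁ = Φ' ++ [Fm.atom p] ∧ Deriv (Φ' ++ [X] ++ Φ₂ ++ S₂) C := by
  intro Λ C h
  induction h with
  | ax A =>
    intro Φ₁ S₁ Φ₂ S₂ hΛ hQ hOk
    have : Fm.lDiv (Fm.atom p) X ∈ [A] := by rw [hΛ]; simp
    simp at this
    rcases hOk with ⟨q, hq⟩ | hq <;> rw [← this] at hq <;> simp at hq
  | lDivL Γ Pi Δ A B C h1 h2 ih1 ih2 =>
    intro Φ₁ S₁ Φ₂ S₂ hΛ hQ hOk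
    rcases locate5 hΛ with ⟨A₁, A₂, hf, he1, he2⟩ | ⟨B₁, B₂, hf, he1, he2⟩ |
      ⟨hf, he1, he2⟩ | ⟨C₁, C₂, hf, he1, he2⟩ | ⟨D₁, D₂, hf, he1, he2⟩
    · obtain ⟨n, hn, -⟩ := hQ.a1 _ (mem_of_split hf); simp at hn
    · -- principal in S₁
      have hBr : ∃ r, B = Fm.atom r := by
        rcases hQ.l1 _ (mem_of_split hf) with ⟨r, A', hEq⟩ | ⟨r, s, B', C', hEq⟩
        · injection hEq with hh1 hh2; exact ⟨r, hh1⟩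
        · simp at hEq
      obtain ⟨r, rfl⟩ := hBr
      rcases List.append_eq_append_iff.mp he1 with ⟨u, hu1, hu2⟩ | ⟨u, hu1, hu2⟩
      · -- Φ₁ = Γ ++ u, Pi = u ++ B₁
        have hPi : Pi = [Fm.atom r] := by
          refine lemU b E h2 r u B₁ rfl hu2 (hQ.a1.sub ?_) (hQ.l1.sub ?_) ?_
          · intro x hx; rw [hu1]; simp [hx]
          · intro x hx; rw [hf]; simp [hx]
          · intro ψ S' hS'
            rcases hQ.c4 ψ (S' ++ [Fm.lDiv (Fm.atom r) A] ++ B₂) (by rw [hf, hS']; simp) with hΦ | hE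
            · left; rw [hΦ] at hu1; exact (List.append_eq_nil_iff.mp hu1.symm).2
            · right; exact hE
        rcases append_singleton (hu2.symm.trans hPi) with ⟨rfl, hB1⟩ | ⟨hu, hB1⟩
        · exact absurd (hQ.l1 (Fm.atom r) (by rw [hf, hB1]; simp)) not_locked_atom
        · rcases hQ.c4 (Fm.lDiv (Fm.atom r) A) B₂ (by rw [hf, hB1]; simp) with hΦ | hE
          · rw [hΦ] at hu1; simp [hu] at hu1
          · have hrb : r = b := by injection hE with hh1 hh2; injection hh1 with hh
            obtain ⟨n, hn, hnb⟩ := hQ.a1 (Fm.atom r) (by rw [hu1, hu]; simp)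
            rw [hrb] at hn; injection hn with hn'; exact absurd hn'.symm hnb
      · -- Γ = Φ₁ ++ u, B₁ = u ++ Pi
        have hPi : Pi = [Fm.atom r] := by
          refine lemU b E h2 r [] Pi rfl (by simp) (by intro x hx; simp at hx) (hQ.l1.sub ?_)
            (fun _ _ _ => Or.inl rfl)
          intro x hx; rw [hf, hu2]; simp [hx]
        exact absurd (hQ.l1 (Fm.atom r) (by rw [hf, hu2, hPi]; simp)) not_locked_atom
    · -- principal is the marked formula p \ X
      injection hf with hfB hfA
      subst hfA
      have he1' : Γ ++ Pi = Φ₁ ++ S₁ := by rw [he1]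
      rcases List.append_eq_append_iff.mp he1' with ⟨u, hu1, hu2⟩ | ⟨u, hu1, hu2⟩
      · -- Φ₁ = Γ ++ u, Pi = u ++ S₁
        have hPi : Pi = [Fm.atom p] := by
          refine lemU b E h2 p u S₁ hfB hu2 (hQ.a1.sub ?_) hQ.l1 ?_
          · intro x hx; rw [hu1]; simp [hx]
          · intro ψ S' hS'
            rcases hQ.c4 ψ S' hS' with hΦ | hE
            · left; rw [hΦ] at hu1; exact (List.append_eq_nil_iff.mp hu1.symm).2
            · right; exact hE
        rcases append_singleton (hu2.symm.trans hPi) with ⟨rfl, hS1⟩ | ⟨hu, hS1⟩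
        · exact absurd (hQ.l1 (Fm.atom p) (by rw [hS1]; simp)) not_locked_atom
        · refine ⟨hS1, Γ, by rw [hu1, hu], ?_⟩
          rw [he2] at h1; simpa using h1
      · -- Γ = Φ₁ ++ u, S₁ = u ++ Pi
        have hPi : Pi = [Fm.atom p] := by
          refine lemU b E h2 p [] Pi hfB (by simp) (by intro x hx; simp at hx)
            (hQ.l1.sub ?_) (fun _ _ _ => Or.inl rfl)
          intro x hx; rw [hu2]; simp [hx]
        exact absurd (hQ.l1 (Fm.atom p) (by rw [hu2, hPi]; simp)) not_locked_atom
    · obtain ⟨n, hn, -⟩ := hQ.a2 _ (mem_of_split hf); simp at hn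
    · -- principal in S₂
      have hBr : ∃ r, B = Fm.atom r := by
        rcases hQ.l2 _ (mem_of_split hf) with ⟨r, A', hEq⟩ | ⟨r, s, B', C', hEq⟩
        · injection hEq with hh1 hh2; exact ⟨r, hh1⟩
        · simp at hEq
      obtain ⟨r, rfl⟩ := hBr
      have he1' : (Φ₁ ++ S₁) ++ [Fm.lDiv (Fm.atom p) X] ++ (Φ₂ ++ D₁) = Γ ++ Pi := by
        rw [he1]; simp
      rcases cons_split he1' with ⟨t, ht1, ht2⟩ | ⟨t, ht1, ht2⟩
      · -- marked in Γ : Γ = Φ₁ ++ S₁ ++ [pX] ++ t, Φ₂ ++ D₁ = t ++ Pi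
        rcases List.append_eq_append_iff.mp ht2 with ⟨v, hv1, hv2⟩ | ⟨v, hv1, hv2⟩
        · -- t = Φ₂ ++ v, D₁ = v ++ Pi
          have hPi : Pi = [Fm.atom r] := by
            refine lemU b E h2 r [] Pi rfl (by simp) (by intro x hx; simp at hx)
              (hQ.l2.sub ?_) (fun _ _ _ => Or.inl rfl)
            intro x hx; rw [hf, hv2]; simp [hx]
          exact absurd (hQ.l2 (Fm.atom r) (by rw [hf, hv2, hPi]; simp)) not_locked_atom
        · -- Φ₂ = t ++ v, Pi = v ++ D₁
          have hPi : Pi = [Fm.atom r] := by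
            refine lemU b E h2 r v D₁ rfl hv2 (hQ.a2.sub ?_) (hQ.l2.sub ?_) ?_
            · intro x hx; rw [hv1]; simp [hx]
            · intro x hx; rw [hf]; simp [hx]
            · intro ψ S' hS'
              rcases hQ.c5 ψ (S' ++ [Fm.lDiv (Fm.atom r) A] ++ D₂) (by rw [hf, hS']; simp) with
                ⟨h1', h2'⟩ | hS1 | hE
              · left; rw [h2'] at hv1; exact (List.append_eq_nil_iff.mp hv1.symm).2
              · left; rw [hQ.c3 hS1] at hv1; exact (List.append_eq_nil_iff.mp hv1.symm).2
              · right; exact hE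
          rcases append_singleton (hv2.symm.trans hPi) with ⟨rfl, hD1⟩ | ⟨hv, hD1⟩
          · exact absurd (hQ.l2 (Fm.atom r) (by rw [hf, hD1]; simp)) not_locked_atom
          · rcases hQ.c5 (Fm.lDiv (Fm.atom r) A) D₂ (by rw [hf, hD1]; simp) with
              ⟨h1', h2'⟩ | hS1 | hE
            · rw [h2'] at hv1; simp [hv] at hv1
            · rw [hQ.c3 hS1] at hv1; simp [hv] at hv1
            · have hrb : r = b := by injection hE with hh1 hh2; injection hh1 with hh
              obtain ⟨n, hn, hnb⟩ := hQ.a2 (Fm.atom r) (by rw [hv1, hv]; simp)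
              rw [hrb] at hn; injection hn with hn'; exact absurd hn'.symm hnb
      · -- marked in Pi : Φ₁ ++ S₁ = Γ ++ t, Pi = t ++ [pX] ++ Φ₂ ++ D₁
        rcases List.append_eq_append_iff.mp ht1 with ⟨v, hv1, hv2⟩ | ⟨v, hv1, hv2⟩
        · -- Γ = Φ₁ ++ v, S₁ = v ++ t
          have hc5' : ∀ ψ S', D₁ = ψ :: S' → ([] = ([] : List Fm) ∧ Φ₂ = []) ∨ t ≠ [] ∨
              ψ = Fm.lDiv (Fm.atom b) E := by
            intro ψ S' hS'
            rcases hQ.c5 ψ (S' ++ [Fm.lDiv (Fm.atom r) A] ++ D₂) (by rw [hf, hS']; simp) with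
              ⟨h1', h2'⟩ | hS1 | hE
            · exact Or.inl ⟨rfl, h2'⟩
            · rcases t with _ | ⟨c, t⟩
              · exact Or.inl ⟨rfl, hQ.c3 hS1⟩
              · exact Or.inr (Or.inl (by simp))
            · exact Or.inr (Or.inr hE)
          have := ih2 [] t Φ₂ D₁ (by rw [ht2]; simp)
            ⟨by intro x hx; simp at hx, hQ.a2, hQ.l1.sub (by intro x hx; rw [hv2]; simp [hx]),
             hQ.l2.sub (by intro x hx; rw [hf]; simp [hx]),
             fun ht => hQ.c3 (by rw [hv2]; simp [ht]), fun _ _ _ => Or.inl rfl, hc5'⟩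
            (Or.inl ⟨r, rfl⟩)
          obtain ⟨-, Φ', hΦ', -⟩ := this
          simp at hΦ'
        · -- Φ₁ = Γ ++ v, t = v ++ S₁
          have hc5' : ∀ ψ S', D₁ = ψ :: S' → (v = [] ∧ Φ₂ = []) ∨ S₁ ≠ [] ∨
              ψ = Fm.lDiv (Fm.atom b) E := by
            intro ψ S' hS'
            rcases hQ.c5 ψ (S' ++ [Fm.lDiv (Fm.atom r) A] ++ D₂) (by rw [hf, hS']; simp) with
              ⟨h1', h2'⟩ | hS1 | hE
            · exact Or.inl ⟨by rw [h1'] at hv1; exact (List.append_eq_nil_iff.mp hv1.symm).2, h2'⟩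
            · exact Or.inr (Or.inl hS1)
            · exact Or.inr (Or.inr hE)
          have hc4' : ∀ ψ S', S₁ = ψ :: S' → v = [] ∨ ψ = Fm.lDiv (Fm.atom b) E := by
            intro ψ S' hS'
            rcases hQ.c4 ψ S' hS' with hΦ | hE
            · left; rw [hΦ] at hv1; exact (List.append_eq_nil_iff.mp hv1.symm).2
            · right; exact hE
          have := ih2 v S₁ Φ₂ D₁ (by rw [ht2, hv2]; simp)
            ⟨hQ.a1.sub (by intro x hx; rw [hv1]; simp [hx]), hQ.a2, hQ.l1,
             hQ.l2.sub (by intro x hx; rw [hf]; simp [hx]), hQ.c3, hc4', hc5'⟩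
            (Or.inl ⟨r, rfl⟩)
          obtain ⟨hS1, Φ', hΦ', hD⟩ := this
          refine ⟨hS1, Γ ++ Φ', by rw [hv1, hΦ']; simp, ?_⟩
          have hnew := Deriv.lDivL Γ (Φ' ++ [X] ++ Φ₂ ++ D₁) D₂ A (Fm.atom r) C
            (by rw [he2] at h1; exact h1) hD
          rw [hf]
          simp only [List.append_assoc] at hnew ⊢
          exact hnew
  | lDivR Pi A B h ih =>
    intro Φ₁ S₁ Φ₂ S₂ hΛ hQ hOk
    rcases hOk with ⟨q, hq⟩ | hq <;> simp at hq
  | rDivL Γ Pi Δ A B C h1 h2 ih1 ih2 =>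
    intro Φ₁ S₁ Φ₂ S₂ hΛ hQ hOk
    have hm : Fm.rDiv A B ∈ Φ₁ ++ S₁ ++ [Fm.lDiv (Fm.atom p) X] ++ Φ₂ ++ S₂ := by
      rw [← hΛ]; simp
    rcases shapeQ hQ hm with ⟨n, h⟩ | ⟨x, y, h⟩ | ⟨x, y, h⟩ <;> simp at h
  | rDivR Pi A B h ih =>
    intro Φ₁ S₁ Φ₂ S₂ hΛ hQ hOk
    rcases hOk with ⟨q, hq⟩ | hq <;> simp at hq
  | mulL Γ Δ A B C h ih =>
    intro Φ₁ S₁ Φ₂ S₂ hΛ hQ hOk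
    have hm : Fm.mul A B ∈ Φ₁ ++ S₁ ++ [Fm.lDiv (Fm.atom p) X] ++ Φ₂ ++ S₂ := by
      rw [← hΛ]; simp
    rcases shapeQ hQ hm with ⟨n, h⟩ | ⟨x, y, h⟩ | ⟨x, y, h⟩ <;> simp at h
  | mulR Γ Δ A B h1 h2 ih1 ih2 =>
    intro Φ₁ S₁ Φ₂ S₂ hΛ hQ hOk
    have hAB : A = aL ∧ B = okF := by
      rcases hOk with ⟨q, hq⟩ | hq
      · simp at hq
      · injection hq with hh1 hh2; exact ⟨hh1, hh2⟩
    obtain ⟨rfl, rfl⟩ := hAB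
    have hΛ' : (Φ₁ ++ S₁) ++ [Fm.lDiv (Fm.atom p) X] ++ (Φ₂ ++ S₂) = Γ ++ Δ := by
      rw [hΛ]; simp
    rcases cons_split hΛ' with ⟨t, ht1, ht2⟩ | ⟨t, ht1, ht2⟩
    · -- marked in Γ
      rcases List.append_eq_append_iff.mp ht2 with ⟨v, hv1, hv2⟩ | ⟨v, hv1, hv2⟩
      · -- t = Φ₂ ++ v, S₂ = v ++ Δ
        have := ih1 Φ₁ S₁ Φ₂ v (by rw [ht1, hv1]; simp)
          ⟨hQ.a1, hQ.a2, hQ.l1, hQ.l2.sub (by intro x hx; rw [hv2]; simp [hx]), hQ.c3, hQ.c4,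
           fun ψ S' hS' => hQ.c5 ψ (S' ++ Δ) (by rw [hv2, hS']; simp)⟩ (Or.inl ⟨0, rfl⟩)
        obtain ⟨hS1, Φ', hΦ', hD⟩ := this
        refine ⟨hS1, Φ', hΦ', ?_⟩
        have hnew := Deriv.mulR _ _ _ _ hD h2
        rw [hv2]
        simp only [List.append_assoc] at hnew ⊢
        exact hnew
      · -- Φ₂ = t ++ v, Δ = v ++ S₂
        have := ih1 Φ₁ S₁ t [] (by rw [ht1]; simp)
          ⟨hQ.a1, hQ.a2.sub (by intro x hx; rw [hv1]; simp [hx]), hQ.l1,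
           by intro x hx; simp at hx, fun h => (List.append_eq_nil_iff.mp (hv1.symm.trans (hQ.c3 h))).1,
           hQ.c4, by intro ψ S' hS'; simp at hS'⟩ (Or.inl ⟨0, rfl⟩)
        obtain ⟨hS1, Φ', hΦ', hD⟩ := this
        refine ⟨hS1, Φ', hΦ', ?_⟩
        have hnew := Deriv.mulR _ _ _ _ (by simpa using hD) h2
        rw [hv2] at hnew
        rw [hv1]
        simpa using hnew
    · -- marked in Δ
      rcases List.append_eq_append_iff.mp ht1 with ⟨v, hv1, hv2⟩ | ⟨v, hv1, hv2⟩
      · -- Γ = Φ₁ ++ v, S₁ = v ++ t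
        have hc5' : ∀ ψ S', S₂ = ψ :: S' → ([] = ([] : List Fm) ∧ Φ₂ = []) ∨ t ≠ [] ∨
            ψ = Fm.lDiv (Fm.atom b) E := by
          intro ψ S' hS'
          rcases hQ.c5 ψ S' hS' with ⟨h1', h2'⟩ | hS1 | hE
          · exact Or.inl ⟨rfl, h2'⟩
          · rcases t with _ | ⟨c, t⟩
            · exact Or.inl ⟨rfl, hQ.c3 hS1⟩
            · exact Or.inr (Or.inl (by simp))
          · exact Or.inr (Or.inr hE)
        have := ih2 [] t Φ₂ S₂ (by rw [ht2]; simp)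
          ⟨by intro x hx; simp at hx, hQ.a2, hQ.l1.sub (by intro x hx; rw [hv2]; simp [hx]),
           hQ.l2, fun ht => hQ.c3 (by rw [hv2]; simp [ht]), fun _ _ _ => Or.inl rfl, hc5'⟩
          (Or.inl ⟨6, rfl⟩)
        obtain ⟨-, Φ', hΦ', -⟩ := this
        simp at hΦ'
      · -- Φ₁ = Γ ++ v, t = v ++ S₁
        have hc4' : ∀ ψ S', S₁ = ψ :: S' → v = [] ∨ ψ = Fm.lDiv (Fm.atom b) E := by
          intro ψ S' hS'
          rcases hQ.c4 ψ S' hS' with hΦ | hE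
          · left; rw [hΦ] at hv1; exact (List.append_eq_nil_iff.mp hv1.symm).2
          · right; exact hE
        have hc5' : ∀ ψ S', S₂ = ψ :: S' → (v = [] ∧ Φ₂ = []) ∨ S₁ ≠ [] ∨
            ψ = Fm.lDiv (Fm.atom b) E := by
          intro ψ S' hS'
          rcases hQ.c5 ψ S' hS' with ⟨h1', h2'⟩ | hS1 | hE
          · exact Or.inl ⟨by rw [h1'] at hv1; exact (List.append_eq_nil_iff.mp hv1.symm).2, h2'⟩
          · exact Or.inr (Or.inl hS1)
          · exact Or.inr (Or.inr hE)
        have := ih2 v S₁ Φ₂ S₂ (by rw [ht2, hv2]; simp)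
          ⟨hQ.a1.sub (by intro x hx; rw [hv1]; simp [hx]), hQ.a2, hQ.l1, hQ.l2,
           hQ.c3, hc4', hc5'⟩ (Or.inl ⟨6, rfl⟩)
        obtain ⟨hS1, Φ', hΦ', hD⟩ := this
        refine ⟨hS1, Γ ++ Φ', by rw [hv1, hΦ']; simp, ?_⟩
        have hnew := Deriv.mulR _ _ _ _ h1 hD
        simp only [List.append_assoc] at hnew ⊢
        exact hnew
  | andL1 Γ Δ A₁ A₂ C h ih =>
    intro Φ₁ S₁ Φ₂ S₂ hΛ hQ hOk
    rcases locate5 hΛ with ⟨A₁', A₂', hf, he1, he2⟩ | ⟨B₁, B₂, hf, he1, he2⟩ |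
      ⟨hf, he1, he2⟩ | ⟨C₁, C₂, hf, he1, he2⟩ | ⟨D₁, D₂, hf, he1, he2⟩
    · obtain ⟨n, hn, -⟩ := hQ.a1 _ (mem_of_split hf); simp at hn
    · -- in S₁ : impossible in the end
      have hLA : Locked A₁ := by
        rcases hQ.l1 _ (mem_of_split hf) with ⟨r, A', hEq⟩ | ⟨r, s, B', C', hEq⟩
        · simp at hEq
        · injection hEq with hh1 hh2; exact Or.inl ⟨r, B', hh1⟩
      have hc4' : ∀ ψ S', B₁ ++ [A₁] ++ B₂ = ψ :: S' → Φ₁ = [] ∨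
          ψ = Fm.lDiv (Fm.atom b) E := by
        intro ψ S' hS'
        rcases B₁ with _ | ⟨c, B₁'⟩
        · simp at hS'
          rcases hQ.c4 (Fm.and A₁ A₂) B₂ (by rw [hf]; simp) with hΦ | hE
          · exact Or.inl hΦ
          · simp at hE
        · simp only [List.cons_append, List.cons.injEq] at hS'
          exact hS'.1 ▸ hQ.c4 c (B₁' ++ [Fm.and A₁ A₂] ++ B₂) (by rw [hf]; simp)
      have hls : LockedSeq (B₁ ++ [A₁] ++ B₂) := by
        intro x hx
        simp only [List.mem_append, List.mem_singleton] at hx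
        rcases hx with (hx | rfl) | hx
        · exact hQ.l1 _ (by rw [hf]; simp [hx])
        · exact hLA
        · exact hQ.l1 _ (by rw [hf]; simp [hx])
      have := ih Φ₁ (B₁ ++ [A₁] ++ B₂) Φ₂ S₂ (by rw [he1, he2]; simp)
        ⟨hQ.a1, hQ.a2, hls, hQ.l2, fun _ => hQ.c3 (by rw [hf]; simp), hc4',
         fun ψ S' hS' => Or.inr (Or.inl (by simp))⟩ hOk
      obtain ⟨h0, -⟩ := this; simp at h0
    · simp at hf
    · obtain ⟨n, hn, -⟩ := hQ.a2 _ (mem_of_split hf); simp at hn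
    · -- in S₂
      have hLA : Locked A₁ := by
        rcases hQ.l2 _ (mem_of_split hf) with ⟨r, A', hEq⟩ | ⟨r, s, B', C', hEq⟩
        · simp at hEq
        · injection hEq with hh1 hh2; exact Or.inl ⟨r, B', hh1⟩
      have hc5' : ∀ ψ S', D₁ ++ [A₁] ++ D₂ = ψ :: S' → (Φ₁ = [] ∧ Φ₂ = []) ∨ S₁ ≠ [] ∨
          ψ = Fm.lDiv (Fm.atom b) E := by
        intro ψ S' hS'
        rcases D₁ with _ | ⟨c, D₁'⟩
        · simp at hS'
          rcases hQ.c5 (Fm.and A₁ A₂) D₂ (by rw [hf]; simp) with h' | h' | h'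
          · exact Or.inl h'
          · exact Or.inr (Or.inl h')
          · simp at h'
        · simp only [List.cons_append, List.cons.injEq] at hS'
          exact hS'.1 ▸ hQ.c5 c (D₁' ++ [Fm.and A₁ A₂] ++ D₂) (by rw [hf]; simp)
      have hls : LockedSeq (D₁ ++ [A₁] ++ D₂) := by
        intro x hx
        simp only [List.mem_append, List.mem_singleton] at hx
        rcases hx with (hx | rfl) | hx
        · exact hQ.l2 _ (by rw [hf]; simp [hx])
        · exact hLA
        · exact hQ.l2 _ (by rw [hf]; simp [hx])
      have := ih Φ₁ S₁ Φ₂ (D₁ ++ [A₁] ++ D₂) (by rw [he1, he2]; simp)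
        ⟨hQ.a1, hQ.a2, hQ.l1, hls, hQ.c3, hQ.c4, hc5'⟩ hOk
      obtain ⟨hS1, Φ', hΦ', hD⟩ := this
      refine ⟨hS1, Φ', hΦ', ?_⟩
      have hnew := Deriv.andL1 (Φ' ++ [X] ++ Φ₂ ++ D₁) D₂ A₁ A₂ C
        (by simp only [List.append_assoc] at hD ⊢; exact hD)
      rw [hf]
      simp only [List.append_assoc] at hnew ⊢
      exact hnew
  | andL2 Γ Δ A₁ A₂ C h ih =>
    intro Φ₁ S₁ Φ₂ S₂ hΛ hQ hOk
    rcases locate5 hΛ with ⟨A₁', A₂', hf, he1, he2⟩ | ⟨B₁, B₂, hf, he1, he2⟩ |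
      ⟨hf, he1, he2⟩ | ⟨C₁, C₂, hf, he1, he2⟩ | ⟨D₁, D₂, hf, he1, he2⟩
    · obtain ⟨n, hn, -⟩ := hQ.a1 _ (mem_of_split hf); simp at hn
    · have hLA : Locked A₂ := by
        rcases hQ.l1 _ (mem_of_split hf) with ⟨r, A', hEq⟩ | ⟨r, s, B', C', hEq⟩
        · simp at hEq
        · injection hEq with hh1 hh2; exact Or.inl ⟨s, C', hh2⟩
      have hc4' : ∀ ψ S', B₁ ++ [A₂] ++ B₂ = ψ :: S' → Φ₁ = [] ∨
          ψ = Fm.lDiv (Fm.atom b) E := by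
        intro ψ S' hS'
        rcases B₁ with _ | ⟨c, B₁'⟩
        · simp at hS'
          rcases hQ.c4 (Fm.and A₁ A₂) B₂ (by rw [hf]; simp) with hΦ | hE
          · exact Or.inl hΦ
          · simp at hE
        · simp only [List.cons_append, List.cons.injEq] at hS'
          exact hS'.1 ▸ hQ.c4 c (B₁' ++ [Fm.and A₁ A₂] ++ B₂) (by rw [hf]; simp)
      have hls : LockedSeq (B₁ ++ [A₂] ++ B₂) := by
        intro x hx
        simp only [List.mem_append, List.mem_singleton] at hx
        rcases hx with (hx | rfl) | hx
        · exact hQ.l1 _ (by rw [hf]; simp [hx])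
        · exact hLA
        · exact hQ.l1 _ (by rw [hf]; simp [hx])
      have := ih Φ₁ (B₁ ++ [A₂] ++ B₂) Φ₂ S₂ (by rw [he1, he2]; simp)
        ⟨hQ.a1, hQ.a2, hls, hQ.l2, fun _ => hQ.c3 (by rw [hf]; simp), hc4',
         fun ψ S' hS' => Or.inr (Or.inl (by simp))⟩ hOk
      obtain ⟨h0, -⟩ := this; simp at h0
    · simp at hf
    · obtain ⟨n, hn, -⟩ := hQ.a2 _ (mem_of_split hf); simp at hn
    · have hLA : Locked A₂ := by
        rcases hQ.l2 _ (mem_of_split hf) with ⟨r, A', hEq⟩ | ⟨r, s, B', C', hEq⟩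
        · simp at hEq
        · injection hEq with hh1 hh2; exact Or.inl ⟨s, C', hh2⟩
      have hc5' : ∀ ψ S', D₁ ++ [A₂] ++ D₂ = ψ :: S' → (Φ₁ = [] ∧ Φ₂ = []) ∨ S₁ ≠ [] ∨
          ψ = Fm.lDiv (Fm.atom b) E := by
        intro ψ S' hS'
        rcases D₁ with _ | ⟨c, D₁'⟩
        · simp at hS'
          rcases hQ.c5 (Fm.and A₁ A₂) D₂ (by rw [hf]; simp) with h' | h' | h'
          · exact Or.inl h'
          · exact Or.inr (Or.inl h')
          · simp at h'
        · simp only [List.cons_append, List.cons.injEq] at hS'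
          exact hS'.1 ▸ hQ.c5 c (D₁' ++ [Fm.and A₁ A₂] ++ D₂) (by rw [hf]; simp)
      have hls : LockedSeq (D₁ ++ [A₂] ++ D₂) := by
        intro x hx
        simp only [List.mem_append, List.mem_singleton] at hx
        rcases hx with (hx | rfl) | hx
        · exact hQ.l2 _ (by rw [hf]; simp [hx])
        · exact hLA
        · exact hQ.l2 _ (by rw [hf]; simp [hx])
      have := ih Φ₁ S₁ Φ₂ (D₁ ++ [A₂] ++ D₂) (by rw [he1, he2]; simp)
        ⟨hQ.a1, hQ.a2, hQ.l1, hls, hQ.c3, hQ.c4, hc5'⟩ hOk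
      obtain ⟨hS1, Φ', hΦ', hD⟩ := this
      refine ⟨hS1, Φ', hΦ', ?_⟩
      have hnew := Deriv.andL2 (Φ' ++ [X] ++ Φ₂ ++ D₁) D₂ A₁ A₂ C
        (by simp only [List.append_assoc] at hD ⊢; exact hD)
      rw [hf]
      simp only [List.append_assoc] at hnew ⊢
      exact hnew
  | andR Pi A₁ A₂ h1 h2 ih1 ih2 =>
    intro Φ₁ S₁ Φ₂ S₂ hΛ hQ hOk
    rcases hOk with ⟨q, hq⟩ | hq <;> simp at hq
  | orL Γ Δ A₁ A₂ C h1 h2 ih1 ih2 =>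
    intro Φ₁ S₁ Φ₂ S₂ hΛ hQ hOk
    have hm : Fm.or A₁ A₂ ∈ Φ₁ ++ S₁ ++ [Fm.lDiv (Fm.atom p) X] ++ Φ₂ ++ S₂ := by
      rw [← hΛ]; simp
    rcases shapeQ hQ hm with ⟨n, h⟩ | ⟨x, y, h⟩ | ⟨x, y, h⟩ <;> simp at h
  | orR1 Pi A₁ A₂ h ih =>
    intro Φ₁ S₁ Φ₂ S₂ hΛ hQ hOk
    rcases hOk with ⟨q, hq⟩ | hq <;> simp at hq
  | orR2 Pi A₁ A₂ h ih =>
    intro Φ₁ S₁ Φ₂ S₂ hΛ hQ hOk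
    rcases hOk with ⟨q, hq⟩ | hq <;> simp at hq
  | zeroL Γ Δ C =>
    intro Φ₁ S₁ Φ₂ S₂ hΛ hQ hOk
    have hm : Fm.zero ∈ Φ₁ ++ S₁ ++ [Fm.lDiv (Fm.atom p) X] ++ Φ₂ ++ S₂ := by
      rw [← hΛ]; simp
    rcases shapeQ hQ hm with ⟨n, h⟩ | ⟨x, y, h⟩ | ⟨x, y, h⟩ <;> simp at h
  | oneL Γ Δ C h ih =>
    intro Φ₁ S₁ Φ₂ S₂ hΛ hQ hOk
    have hm : Fm.one ∈ Φ₁ ++ S₁ ++ [Fm.lDiv (Fm.atom p) X] ++ Φ₂ ++ S₂ := by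
      rw [← hΛ]; simp
    rcases shapeQ hQ hm with ⟨n, h⟩ | ⟨x, y, h⟩ | ⟨x, y, h⟩ <;> simp at h
  | oneR =>
    intro Φ₁ S₁ Φ₂ S₂ hΛ hQ hOk
    have : Fm.lDiv (Fm.atom p) X ∈ ([] : List Fm) := by rw [hΛ]; simp
    simp at this
  | bangL n Γ Δ A B h ih =>
    intro Φ₁ S₁ Φ₂ S₂ hΛ hQ hOk
    have hm : Fm.bang A ∈ Φ₁ ++ S₁ ++ [Fm.lDiv (Fm.atom p) X] ++ Φ₂ ++ S₂ := by
      rw [← hΛ]; simp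
    rcases shapeQ hQ hm with ⟨n', h'⟩ | ⟨x, y, h'⟩ | ⟨x, y, h'⟩ <;> simp at h'
  | bangR A B h ih =>
    intro Φ₁ S₁ Φ₂ S₂ hΛ hQ hOk
    rcases hOk with ⟨q, hq⟩ | hq <;> simp at hq
  | starL Γ Δ A B h ih =>
    intro Φ₁ S₁ Φ₂ S₂ hΛ hQ hOk
    have hm : Fm.star A ∈ Φ₁ ++ S₁ ++ [Fm.lDiv (Fm.atom p) X] ++ Φ₂ ++ S₂ := by
      rw [← hΛ]; simp
    rcases shapeQ hQ hm with ⟨n, h'⟩ | ⟨x, y, h'⟩ | ⟨x, y, h'⟩ <;> simp at h'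
  | starR Ps A h ih =>
    intro Φ₁ S₁ Φ₂ S₂ hΛ hQ hOk
    rcases hOk with ⟨q, hq⟩ | hq <;> simp at hq
  | nablaL Γ Δ A B h ih =>
    intro Φ₁ S₁ Φ₂ S₂ hΛ hQ hOk
    have hm : Fm.nabla A ∈ Φ₁ ++ S₁ ++ [Fm.lDiv (Fm.atom p) X] ++ Φ₂ ++ S₂ := by
      rw [← hΛ]; simp
    rcases shapeQ hQ hm with ⟨n, h'⟩ | ⟨x, y, h'⟩ | ⟨x, y, h'⟩ <;> simp at h'
  | nablaR A B h ih =>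
    intro Φ₁ S₁ Φ₂ S₂ hΛ hQ hOk
    rcases hOk with ⟨q, hq⟩ | hq <;> simp at hq
  | nablaP1 Γ Pi Δ A B h ih =>
    intro Φ₁ S₁ Φ₂ S₂ hΛ hQ hOk
    have hm : Fm.nabla A ∈ Φ₁ ++ S₁ ++ [Fm.lDiv (Fm.atom p) X] ++ Φ₂ ++ S₂ := by
      rw [← hΛ]; simp
    rcases shapeQ hQ hm with ⟨n, h'⟩ | ⟨x, y, h'⟩ | ⟨x, y, h'⟩ <;> simp at h'
  | nablaP2 Γ Pi Δ A B h ih =>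
    intro Φ₁ S₁ Φ₂ S₂ hΛ hQ hOk
    have hm : Fm.nabla A ∈ Φ₁ ++ S₁ ++ [Fm.lDiv (Fm.atom p) X] ++ Φ₂ ++ S₂ := by
      rw [← hΛ]; simp
    rcases shapeQ hQ hm with ⟨n, h'⟩ | ⟨x, y, h'⟩ | ⟨x, y, h'⟩ <;> simp at h'

end LemM
section LemN

lemma ANB.nil {b : ℕ} : ANB b [] := fun x hx => absurd hx List.not_mem_nil
lemma LockedSeq.nil : LockedSeq [] := fun x hx => absurd hx List.not_mem_nil
lemma ANB.app {b : ℕ} {u v : List Fm} (h1 : ANB b u) (h2 : ANB b v) : ANB b (u ++ v) := by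
  intro x hx; rcases List.mem_append.mp hx with h | h
  · exact h1 x h
  · exact h2 x h
lemma LockedSeq.app {u v : List Fm} (h1 : LockedSeq u) (h2 : LockedSeq v) :
    LockedSeq (u ++ v) := by
  intro x hx; rcases List.mem_append.mp hx with h | h
  · exact h1 x h
  · exact h2 x h

lemma shapeN {b : ℕ} {E B : Fm} {Φ₁ S₁ Φ₂ S₂ : List Fm}
    (hQ : QG b E Φ₁ S₁ Φ₂ S₂) {f : Fm}
    (hf : f ∈ Φ₁ ++ S₁ ++ [Fm.nabla B] ++ Φ₂ ++ S₂) :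
    (∃ n, f = Fm.atom n) ∨ (∃ A' B', f = Fm.lDiv A' B') ∨ (∃ A' B', f = Fm.and A' B') ∨
      f = Fm.nabla B := by
  simp only [List.mem_append, List.mem_singleton] at hf
  rcases hf with (((h | h) | rfl) | h) | h
  · obtain ⟨n, rfl, -⟩ := hQ.a1 _ h; exact Or.inl ⟨n, rfl⟩
  · rcases hQ.l1 _ h with ⟨r, A, rfl⟩ | ⟨r, s, B', C, rfl⟩
    · exact Or.inr (Or.inl ⟨_, _, rfl⟩)
    · exact Or.inr (Or.inr (Or.inl ⟨_, _, rfl⟩))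
  · exact Or.inr (Or.inr (Or.inr rfl))
  · obtain ⟨n, rfl, -⟩ := hQ.a2 _ h; exact Or.inl ⟨n, rfl⟩
  · rcases hQ.l2 _ h with ⟨r, A, rfl⟩ | ⟨r, s, B', C, rfl⟩
    · exact Or.inr (Or.inl ⟨_, _, rfl⟩)
    · exact Or.inr (Or.inr (Or.inl ⟨_, _, rfl⟩))

lemma rebuild_repl {C B f g : Fm} {P Q ξ₁ ξ₂ : List Fm}
    (hrule : ∀ Γ Δ, Deriv (Γ ++ [f] ++ Δ) C → Deriv (Γ ++ [g] ++ Δ) C)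
    (hξ : P ++ [f] ++ Q = ξ₁ ++ ξ₂) (hd : Deriv (ξ₁ ++ [B] ++ ξ₂) C) :
    ∃ Ξ₁ Ξ₂, Ξ₁ ++ Ξ₂ = P ++ [g] ++ Q ∧ Deriv (Ξ₁ ++ [B] ++ Ξ₂) C := by
  rcases ins_split hξ with ⟨w, hw1, hw2⟩ | ⟨w, hw1, hw2⟩
  · refine ⟨P ++ [g] ++ w, ξ₂, by rw [hw2]; simp, ?_⟩
    have := hrule P (w ++ [B] ++ ξ₂) (by rw [hw1] at hd; simpa using hd)
    simpa using this
  · refine ⟨ξ₁, w ++ [g] ++ Q, by rw [hw1]; simp, ?_⟩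
    have := hrule (ξ₁ ++ [B] ++ w) Q (by rw [hw2] at hd; simpa using hd)
    simpa using this

/-- The key inversion lemma for `∇B` in a primitive/locked context. -/
lemma lemN (b : ℕ) (E B : Fm) :
    ∀ {Λ C}, Deriv Λ C → ∀ (Φ₁ S₁ Φ₂ S₂ : List Fm),
      Λ = Φ₁ ++ S₁ ++ [Fm.nabla B] ++ Φ₂ ++ S₂ →
      QG b E Φ₁ S₁ Φ₂ S₂ → OkC C →
      ∃ Ξ₁ Ξ₂, Ξ₁ ++ Ξ₂ = Φ₁ ++ S₁ ++ Φ₂ ++ S₂ ∧ Deriv (Ξ₁ ++ [B] ++ Ξ₂) C := by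
  intro Λ C h
  induction h with
  | ax A =>
    intro Φ₁ S₁ Φ₂ S₂ hΛ hQ hOk
    have : Fm.nabla B ∈ [A] := by rw [hΛ]; simp
    simp at this
    rcases hOk with ⟨q, hq⟩ | hq <;> rw [← this] at hq <;> simp at hq
  | lDivL Γ Pi Δ A B0 C h1 h2 ih1 ih2 =>
    intro Φ₁ S₁ Φ₂ S₂ hΛ hQ hOk
    rcases locate5 hΛ with ⟨A₁, A₂, hf, he1, he2⟩ | ⟨B₁, B₂, hf, he1, he2⟩ |
      ⟨hf, he1, he2⟩ | ⟨C₁, C₂, hf, he1, he2⟩ | ⟨D₁, D₂, hf, he1, he2⟩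
    · obtain ⟨n, hn, -⟩ := hQ.a1 _ (mem_of_split hf); simp at hn
    · -- principal in S₁ : impossible
      have hBr : ∃ r, B0 = Fm.atom r := by
        rcases hQ.l1 _ (mem_of_split hf) with ⟨r, A', hEq⟩ | ⟨r, s, B', C', hEq⟩
        · injection hEq with hh1 hh2; exact ⟨r, hh1⟩
        · simp at hEq
      obtain ⟨r, rfl⟩ := hBr
      rcases List.append_eq_append_iff.mp he1 with ⟨u, hu1, hu2⟩ | ⟨u, hu1, hu2⟩
      · have hPi : Pi = [Fm.atom r] := by
          refine lemU b E h2 r u B₁ rfl hu2 (hQ.a1.sub ?_) (hQ.l1.sub ?_) ?_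
          · intro x hx; rw [hu1]; simp [hx]
          · intro x hx; rw [hf]; simp [hx]
          · intro ψ S' hS'
            rcases hQ.c4 ψ (S' ++ [Fm.lDiv (Fm.atom r) A] ++ B₂) (by rw [hf, hS']; simp) with hΦ | hE
            · left; rw [hΦ] at hu1; exact (List.append_eq_nil_iff.mp hu1.symm).2
            · right; exact hE
        rcases append_singleton (hu2.symm.trans hPi) with ⟨rfl, hB1⟩ | ⟨hu, hB1⟩
        · exact absurd (hQ.l1 (Fm.atom r) (by rw [hf, hB1]; simp)) not_locked_atom
        · rcases hQ.c4 (Fm.lDiv (Fm.atom r) A) B₂ (by rw [hf, hB1]; simp) with hΦ | hE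
          · rw [hΦ] at hu1; simp [hu] at hu1
          · have hrb : r = b := by injection hE with hh1 hh2; injection hh1 with hh
            obtain ⟨n, hn, hnb⟩ := hQ.a1 (Fm.atom r) (by rw [hu1, hu]; simp)
            rw [hrb] at hn; injection hn with hn'; exact absurd hn'.symm hnb
      · have hPi : Pi = [Fm.atom r] := by
          refine lemU b E h2 r [] Pi rfl (by simp) ANB.nil (hQ.l1.sub ?_)
            (fun _ _ _ => Or.inl rfl)
          intro x hx; rw [hf, hu2]; simp [hx]
        exact absurd (hQ.l1 (Fm.atom r) (by rw [hf, hu2, hPi]; simp)) not_locked_atom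
    · simp at hf
    · obtain ⟨n, hn, -⟩ := hQ.a2 _ (mem_of_split hf); simp at hn
    · -- principal in S₂
      have hBr : ∃ r, B0 = Fm.atom r := by
        rcases hQ.l2 _ (mem_of_split hf) with ⟨r, A', hEq⟩ | ⟨r, s, B', C', hEq⟩
        · injection hEq with hh1 hh2; exact ⟨r, hh1⟩
        · simp at hEq
      obtain ⟨r, rfl⟩ := hBr
      have he1' : (Φ₁ ++ S₁) ++ [Fm.nabla B] ++ (Φ₂ ++ D₁) = Γ ++ Pi := by
        rw [he1]; simp
      rcases cons_split he1' with ⟨t, ht1, ht2⟩ | ⟨t, ht1, ht2⟩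
      · -- marked in Γ : impossible (adjacency contradiction)
        rcases List.append_eq_append_iff.mp ht2 with ⟨v, hv1, hv2⟩ | ⟨v, hv1, hv2⟩
        · have hPi : Pi = [Fm.atom r] := by
            refine lemU b E h2 r [] Pi rfl (by simp) ANB.nil (hQ.l2.sub ?_)
              (fun _ _ _ => Or.inl rfl)
            intro x hx; rw [hf, hv2]; simp [hx]
          exact absurd (hQ.l2 (Fm.atom r) (by rw [hf, hv2, hPi]; simp)) not_locked_atom
        · have hPi : Pi = [Fm.atom r] := by
            refine lemU b E h2 r v D₁ rfl hv2 (hQ.a2.sub ?_) (hQ.l2.sub ?_) ?_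
            · intro x hx; rw [hv1]; simp [hx]
            · intro x hx; rw [hf]; simp [hx]
            · intro ψ S' hS'
              rcases hQ.c5 ψ (S' ++ [Fm.lDiv (Fm.atom r) A] ++ D₂) (by rw [hf, hS']; simp) with
                ⟨h1', h2'⟩ | hS1 | hE
              · left; rw [h2'] at hv1; exact (List.append_eq_nil_iff.mp hv1.symm).2
              · left; rw [hQ.c3 hS1] at hv1; exact (List.append_eq_nil_iff.mp hv1.symm).2
              · right; exact hE
          rcases append_singleton (hv2.symm.trans hPi) with ⟨rfl, hD1⟩ | ⟨hv, hD1⟩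
          · exact absurd (hQ.l2 (Fm.atom r) (by rw [hf, hD1]; simp)) not_locked_atom
          · rcases hQ.c5 (Fm.lDiv (Fm.atom r) A) D₂ (by rw [hf, hD1]; simp) with
              ⟨h1', h2'⟩ | hS1 | hE
            · rw [h2'] at hv1; simp [hv] at hv1
            · rw [hQ.c3 hS1] at hv1; simp [hv] at hv1
            · have hrb : r = b := by injection hE with hh1 hh2; injection hh1 with hh
              obtain ⟨n, hn, hnb⟩ := hQ.a2 (Fm.atom r) (by rw [hv1, hv]; simp)
              rw [hrb] at hn; injection hn with hn'; exact absurd hn'.symm hnb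
      · -- marked in Pi : rebuild
        rcases List.append_eq_append_iff.mp ht1 with ⟨v, hv1, hv2⟩ | ⟨v, hv1, hv2⟩
        · -- Γ = Φ₁ ++ v, S₁ = v ++ t
          have hc5' : ∀ ψ S', D₁ = ψ :: S' → ([] = ([] : List Fm) ∧ Φ₂ = []) ∨ t ≠ [] ∨
              ψ = Fm.lDiv (Fm.atom b) E := by
            intro ψ S' hS'
            rcases hQ.c5 ψ (S' ++ [Fm.lDiv (Fm.atom r) A] ++ D₂) (by rw [hf, hS']; simp) with
              ⟨h1', h2'⟩ | hS1 | hE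
            · exact Or.inl ⟨rfl, h2'⟩
            · rcases t with _ | ⟨c, t⟩
              · exact Or.inl ⟨rfl, hQ.c3 hS1⟩
              · exact Or.inr (Or.inl (by simp))
            · exact Or.inr (Or.inr hE)
          obtain ⟨ξ₁, ξ₂, hΞ, hd⟩ := ih2 [] t Φ₂ D₁ (by rw [ht2]; simp)
            ⟨ANB.nil, hQ.a2, hQ.l1.sub (by intro x hx; rw [hv2]; simp [hx]),
             hQ.l2.sub (by intro x hx; rw [hf]; simp [hx]),
             fun ht => hQ.c3 (by rw [hv2]; intro hc; exact ht (List.append_eq_nil_iff.mp hc).2), fun _ _ _ => Or.inl rfl, hc5'⟩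
            (Or.inl ⟨r, rfl⟩)
          have hnew := Deriv.lDivL Γ (ξ₁ ++ [B] ++ ξ₂) D₂ A (Fm.atom r) C
            (by rw [he2] at h1; simpa using h1) hd
          refine ⟨Γ ++ ξ₁, ξ₂ ++ ([Fm.lDiv (Fm.atom r) A] ++ D₂),
            (glue hΞ Γ _).trans ?_, by simpa using hnew⟩
          rw [hv1, hv2, hf]; simp
        · -- Φ₁ = Γ ++ v, t = v ++ S₁
          have hc5' : ∀ ψ S', D₁ = ψ :: S' → (v = [] ∧ Φ₂ = []) ∨ S₁ ≠ [] ∨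
              ψ = Fm.lDiv (Fm.atom b) E := by
            intro ψ S' hS'
            rcases hQ.c5 ψ (S' ++ [Fm.lDiv (Fm.atom r) A] ++ D₂) (by rw [hf, hS']; simp) with
              ⟨h1', h2'⟩ | hS1 | hE
            · exact Or.inl ⟨by rw [h1'] at hv1; exact (List.append_eq_nil_iff.mp hv1.symm).2, h2'⟩
            · exact Or.inr (Or.inl hS1)
            · exact Or.inr (Or.inr hE)
          have hc4' : ∀ ψ S', S₁ = ψ :: S' → v = [] ∨ ψ = Fm.lDiv (Fm.atom b) E := by
            intro ψ S' hS'
            rcases hQ.c4 ψ S' hS' with hΦ | hE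
            · left; rw [hΦ] at hv1; exact (List.append_eq_nil_iff.mp hv1.symm).2
            · right; exact hE
          obtain ⟨ξ₁, ξ₂, hΞ, hd⟩ := ih2 v S₁ Φ₂ D₁ (by rw [ht2, hv2]; simp)
            ⟨hQ.a1.sub (by intro x hx; rw [hv1]; simp [hx]), hQ.a2, hQ.l1,
             hQ.l2.sub (by intro x hx; rw [hf]; simp [hx]), hQ.c3, hc4', hc5'⟩
            (Or.inl ⟨r, rfl⟩)
          have hnew := Deriv.lDivL Γ (ξ₁ ++ [B] ++ ξ₂) D₂ A (Fm.atom r) C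
            (by rw [he2] at h1; simpa using h1) hd
          refine ⟨Γ ++ ξ₁, ξ₂ ++ ([Fm.lDiv (Fm.atom r) A] ++ D₂),
            (glue hΞ Γ _).trans ?_, by simpa using hnew⟩
          rw [hv1, hf]; simp
  | lDivR Pi A B0 h ih =>
    intro Φ₁ S₁ Φ₂ S₂ hΛ hQ hOk
    rcases hOk with ⟨q, hq⟩ | hq <;> simp at hq
  | rDivL Γ Pi Δ A B0 C h1 h2 ih1 ih2 =>
    intro Φ₁ S₁ Φ₂ S₂ hΛ hQ hOk
    have hm : Fm.rDiv A B0 ∈ Φ₁ ++ S₁ ++ [Fm.nabla B] ++ Φ₂ ++ S₂ := by rw [← hΛ]; simp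
    rcases shapeN hQ hm with ⟨n, h'⟩ | ⟨x, y, h'⟩ | ⟨x, y, h'⟩ | h' <;> simp at h'
  | rDivR Pi A B0 h ih =>
    intro Φ₁ S₁ Φ₂ S₂ hΛ hQ hOk
    rcases hOk with ⟨q, hq⟩ | hq <;> simp at hq
  | mulL Γ Δ A B0 C h ih =>
    intro Φ₁ S₁ Φ₂ S₂ hΛ hQ hOk
    have hm : Fm.mul A B0 ∈ Φ₁ ++ S₁ ++ [Fm.nabla B] ++ Φ₂ ++ S₂ := by rw [← hΛ]; simp
    rcases shapeN hQ hm with ⟨n, h'⟩ | ⟨x, y, h'⟩ | ⟨x, y, h'⟩ | h' <;> simp at h'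
  | mulR Γ Δ A B0 h1 h2 ih1 ih2 =>
    intro Φ₁ S₁ Φ₂ S₂ hΛ hQ hOk
    have hAB : A = aL ∧ B0 = okF := by
      rcases hOk with ⟨q, hq⟩ | hq
      · simp at hq
      · injection hq with hh1 hh2; exact ⟨hh1, hh2⟩
    obtain ⟨rfl, rfl⟩ := hAB
    have hΛ' : (Φ₁ ++ S₁) ++ [Fm.nabla B] ++ (Φ₂ ++ S₂) = Γ ++ Δ := by rw [hΛ]; simp
    rcases cons_split hΛ' with ⟨t, ht1, ht2⟩ | ⟨t, ht1, ht2⟩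
    · -- marked in Γ
      rcases List.append_eq_append_iff.mp ht2 with ⟨v, hv1, hv2⟩ | ⟨v, hv1, hv2⟩
      · -- t = Φ₂ ++ v, S₂ = v ++ Δ
        obtain ⟨ξ₁, ξ₂, hΞ, hd⟩ := ih1 Φ₁ S₁ Φ₂ v (by rw [ht1, hv1]; simp)
          ⟨hQ.a1, hQ.a2, hQ.l1, hQ.l2.sub (by intro x hx; rw [hv2]; simp [hx]), hQ.c3, hQ.c4,
           fun ψ S' hS' => hQ.c5 ψ (S' ++ Δ) (by rw [hv2, hS']; simp)⟩ (Or.inl ⟨0, rfl⟩)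
        refine ⟨ξ₁, ξ₂ ++ Δ, (glueR hΞ Δ).trans ?_, ?_⟩
        · rw [hv2]; simp
        · have hnew := Deriv.mulR _ _ _ _ hd h2
          simpa using hnew
      · -- Φ₂ = t ++ v, Δ = v ++ S₂
        obtain ⟨ξ₁, ξ₂, hΞ, hd⟩ := ih1 Φ₁ S₁ t [] (by rw [ht1]; simp)
          ⟨hQ.a1, hQ.a2.sub (by intro x hx; rw [hv1]; simp [hx]), hQ.l1, LockedSeq.nil,
           fun h => (List.append_eq_nil_iff.mp (hv1.symm.trans (hQ.c3 h))).1,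
           hQ.c4, by intro ψ S' hS'; simp at hS'⟩ (Or.inl ⟨0, rfl⟩)
        refine ⟨ξ₁, ξ₂ ++ Δ, (glueR hΞ Δ).trans ?_, ?_⟩
        · rw [hv1, hv2]; simp
        · have hnew := Deriv.mulR _ _ _ _ hd h2
          simpa using hnew
    · -- marked in Δ
      rcases List.append_eq_append_iff.mp ht1 with ⟨v, hv1, hv2⟩ | ⟨v, hv1, hv2⟩
      · -- Γ = Φ₁ ++ v, S₁ = v ++ t
        have hc5' : ∀ ψ S', S₂ = ψ :: S' → ([] = ([] : List Fm) ∧ Φ₂ = []) ∨ t ≠ [] ∨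
            ψ = Fm.lDiv (Fm.atom b) E := by
          intro ψ S' hS'
          rcases hQ.c5 ψ S' hS' with ⟨h1', h2'⟩ | hS1 | hE
          · exact Or.inl ⟨rfl, h2'⟩
          · rcases t with _ | ⟨c, t⟩
            · exact Or.inl ⟨rfl, hQ.c3 hS1⟩
            · exact Or.inr (Or.inl (by simp))
          · exact Or.inr (Or.inr hE)
        obtain ⟨ξ₁, ξ₂, hΞ, hd⟩ := ih2 [] t Φ₂ S₂ (by rw [ht2]; simp)
          ⟨ANB.nil, hQ.a2, hQ.l1.sub (by intro x hx; rw [hv2]; simp [hx]),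
           hQ.l2, fun ht => hQ.c3 (by rw [hv2]; intro hc; exact ht (List.append_eq_nil_iff.mp hc).2), fun _ _ _ => Or.inl rfl, hc5'⟩
          (Or.inl ⟨6, rfl⟩)
        refine ⟨Γ ++ ξ₁, ξ₂, (glueL hΞ Γ).trans ?_, ?_⟩
        · rw [hv1, hv2]; simp
        · have hnew := Deriv.mulR _ _ _ _ h1 hd
          simpa using hnew
      · -- Φ₁ = Γ ++ v, t = v ++ S₁
        have hc4' : ∀ ψ S', S₁ = ψ :: S' → v = [] ∨ ψ = Fm.lDiv (Fm.atom b) E := by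
          intro ψ S' hS'
          rcases hQ.c4 ψ S' hS' with hΦ | hE
          · left; rw [hΦ] at hv1; exact (List.append_eq_nil_iff.mp hv1.symm).2
          · right; exact hE
        have hc5' : ∀ ψ S', S₂ = ψ :: S' → (v = [] ∧ Φ₂ = []) ∨ S₁ ≠ [] ∨
            ψ = Fm.lDiv (Fm.atom b) E := by
          intro ψ S' hS'
          rcases hQ.c5 ψ S' hS' with ⟨h1', h2'⟩ | hS1 | hE
          · exact Or.inl ⟨by rw [h1'] at hv1; exact (List.append_eq_nil_iff.mp hv1.symm).2, h2'⟩
          · exact Or.inr (Or.inl hS1)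
          · exact Or.inr (Or.inr hE)
        obtain ⟨ξ₁, ξ₂, hΞ, hd⟩ := ih2 v S₁ Φ₂ S₂ (by rw [ht2, hv2]; simp)
          ⟨hQ.a1.sub (by intro x hx; rw [hv1]; simp [hx]), hQ.a2, hQ.l1, hQ.l2,
           hQ.c3, hc4', hc5'⟩ (Or.inl ⟨6, rfl⟩)
        refine ⟨Γ ++ ξ₁, ξ₂, (glueL hΞ Γ).trans ?_, ?_⟩
        · rw [hv1]; simp
        · have hnew := Deriv.mulR _ _ _ _ h1 hd
          simpa using hnew
  | andL1 Γ Δ A₁ A₂ C h ih =>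
    intro Φ₁ S₁ Φ₂ S₂ hΛ hQ hOk
    rcases locate5 hΛ with ⟨A₁', A₂', hf, he1, he2⟩ | ⟨B₁, B₂, hf, he1, he2⟩ |
      ⟨hf, he1, he2⟩ | ⟨C₁, C₂, hf, he1, he2⟩ | ⟨D₁, D₂, hf, he1, he2⟩
    · obtain ⟨n, hn, -⟩ := hQ.a1 _ (mem_of_split hf); simp at hn
    · -- in S₁
      have hLA : Locked A₁ := by
        rcases hQ.l1 _ (mem_of_split hf) with ⟨r, A', hEq⟩ | ⟨r, s, B', C', hEq⟩
        · simp at hEq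
        · injection hEq with hh1 hh2; exact Or.inl ⟨r, B', hh1⟩
      have hls : LockedSeq (B₁ ++ [A₁] ++ B₂) := by
        intro x hx
        simp only [List.mem_append, List.mem_singleton] at hx
        rcases hx with (hx | rfl) | hx
        · exact hQ.l1 _ (by rw [hf]; simp [hx])
        · exact hLA
        · exact hQ.l1 _ (by rw [hf]; simp [hx])
      have hc4' : ∀ ψ S', B₁ ++ [A₁] ++ B₂ = ψ :: S' → Φ₁ = [] ∨
          ψ = Fm.lDiv (Fm.atom b) E := by
        intro ψ S' hS'
        rcases B₁ with _ | ⟨c, B₁'⟩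
        · simp at hS'
          rcases hQ.c4 (Fm.and A₁ A₂) B₂ (by rw [hf]; simp) with hΦ | hE
          · exact Or.inl hΦ
          · simp at hE
        · simp only [List.cons_append, List.cons.injEq] at hS'
          exact hS'.1 ▸ hQ.c4 c (B₁' ++ [Fm.and A₁ A₂] ++ B₂) (by rw [hf]; simp)
      obtain ⟨ξ₁, ξ₂, hΞ, hd⟩ := ih Φ₁ (B₁ ++ [A₁] ++ B₂) Φ₂ S₂ (by rw [he1, he2]; simp)
        ⟨hQ.a1, hQ.a2, hls, hQ.l2, fun _ => hQ.c3 (by rw [hf]; simp), hc4',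
         fun ψ S' hS' => Or.inr (Or.inl (by simp))⟩ hOk
      have hξ : (Φ₁ ++ B₁) ++ [A₁] ++ (B₂ ++ Φ₂ ++ S₂) = ξ₁ ++ ξ₂ :=
        (by simp : (Φ₁ ++ B₁) ++ [A₁] ++ (B₂ ++ Φ₂ ++ S₂) =
          Φ₁ ++ (B₁ ++ [A₁] ++ B₂) ++ Φ₂ ++ S₂).trans hΞ.symm
      obtain ⟨Ξ₁, Ξ₂, hΞ', hd'⟩ := rebuild_repl
        (fun Γ' Δ' hh => Deriv.andL1 Γ' Δ' A₁ A₂ C hh) hξ hd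
      refine ⟨Ξ₁, Ξ₂, ?_, hd'⟩
      rw [hΞ', hf]; simp
    · simp at hf
    · obtain ⟨n, hn, -⟩ := hQ.a2 _ (mem_of_split hf); simp at hn
    · -- in S₂
      have hLA : Locked A₁ := by
        rcases hQ.l2 _ (mem_of_split hf) with ⟨r, A', hEq⟩ | ⟨r, s, B', C', hEq⟩
        · simp at hEq
        · injection hEq with hh1 hh2; exact Or.inl ⟨r, B', hh1⟩
      have hls : LockedSeq (D₁ ++ [A₁] ++ D₂) := by
        intro x hx
        simp only [List.mem_append, List.mem_singleton] at hx
        rcases hx with (hx | rfl) | hx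
        · exact hQ.l2 _ (by rw [hf]; simp [hx])
        · exact hLA
        · exact hQ.l2 _ (by rw [hf]; simp [hx])
      have hc5' : ∀ ψ S', D₁ ++ [A₁] ++ D₂ = ψ :: S' → (Φ₁ = [] ∧ Φ₂ = []) ∨ S₁ ≠ [] ∨
          ψ = Fm.lDiv (Fm.atom b) E := by
        intro ψ S' hS'
        rcases D₁ with _ | ⟨c, D₁'⟩
        · simp at hS'
          rcases hQ.c5 (Fm.and A₁ A₂) D₂ (by rw [hf]; simp) with h' | h' | h'
          · exact Or.inl h'
          · exact Or.inr (Or.inl h')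
          · simp at h'
        · simp only [List.cons_append, List.cons.injEq] at hS'
          exact hS'.1 ▸ hQ.c5 c (D₁' ++ [Fm.and A₁ A₂] ++ D₂) (by rw [hf]; simp)
      obtain ⟨ξ₁, ξ₂, hΞ, hd⟩ := ih Φ₁ S₁ Φ₂ (D₁ ++ [A₁] ++ D₂) (by rw [he1, he2]; simp)
        ⟨hQ.a1, hQ.a2, hQ.l1, hls, hQ.c3, hQ.c4, hc5'⟩ hOk
      have hξ : (Φ₁ ++ S₁ ++ Φ₂ ++ D₁) ++ [A₁] ++ D₂ = ξ₁ ++ ξ₂ :=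
        (by simp : (Φ₁ ++ S₁ ++ Φ₂ ++ D₁) ++ [A₁] ++ D₂ =
          Φ₁ ++ S₁ ++ Φ₂ ++ (D₁ ++ [A₁] ++ D₂)).trans hΞ.symm
      obtain ⟨Ξ₁, Ξ₂, hΞ', hd'⟩ := rebuild_repl
        (fun Γ' Δ' hh => Deriv.andL1 Γ' Δ' A₁ A₂ C hh) hξ hd
      refine ⟨Ξ₁, Ξ₂, ?_, hd'⟩
      rw [hΞ', hf]; simp
  | andL2 Γ Δ A₁ A₂ C h ih =>
    intro Φ₁ S₁ Φ₂ S₂ hΛ hQ hOk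
    rcases locate5 hΛ with ⟨A₁', A₂', hf, he1, he2⟩ | ⟨B₁, B₂, hf, he1, he2⟩ |
      ⟨hf, he1, he2⟩ | ⟨C₁, C₂, hf, he1, he2⟩ | ⟨D₁, D₂, hf, he1, he2⟩
    · obtain ⟨n, hn, -⟩ := hQ.a1 _ (mem_of_split hf); simp at hn
    · have hLA : Locked A₂ := by
        rcases hQ.l1 _ (mem_of_split hf) with ⟨r, A', hEq⟩ | ⟨r, s, B', C', hEq⟩
        · simp at hEq
        · injection hEq with hh1 hh2; exact Or.inl ⟨s, C', hh2⟩
      have hls : LockedSeq (B₁ ++ [A₂] ++ B₂) := by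
        intro x hx
        simp only [List.mem_append, List.mem_singleton] at hx
        rcases hx with (hx | rfl) | hx
        · exact hQ.l1 _ (by rw [hf]; simp [hx])
        · exact hLA
        · exact hQ.l1 _ (by rw [hf]; simp [hx])
      have hc4' : ∀ ψ S', B₁ ++ [A₂] ++ B₂ = ψ :: S' → Φ₁ = [] ∨
          ψ = Fm.lDiv (Fm.atom b) E := by
        intro ψ S' hS'
        rcases B₁ with _ | ⟨c, B₁'⟩
        · simp at hS'
          rcases hQ.c4 (Fm.and A₁ A₂) B₂ (by rw [hf]; simp) with hΦ | hE
          · exact Or.inl hΦ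
          · simp at hE
        · simp only [List.cons_append, List.cons.injEq] at hS'
          exact hS'.1 ▸ hQ.c4 c (B₁' ++ [Fm.and A₁ A₂] ++ B₂) (by rw [hf]; simp)
      obtain ⟨ξ₁, ξ₂, hΞ, hd⟩ := ih Φ₁ (B₁ ++ [A₂] ++ B₂) Φ₂ S₂ (by rw [he1, he2]; simp)
        ⟨hQ.a1, hQ.a2, hls, hQ.l2, fun _ => hQ.c3 (by rw [hf]; simp), hc4',
         fun ψ S' hS' => Or.inr (Or.inl (by simp))⟩ hOk
      have hξ : (Φ₁ ++ B₁) ++ [A₂] ++ (B₂ ++ Φ₂ ++ S₂) = ξ₁ ++ ξ₂ :=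
        (by simp : (Φ₁ ++ B₁) ++ [A₂] ++ (B₂ ++ Φ₂ ++ S₂) =
          Φ₁ ++ (B₁ ++ [A₂] ++ B₂) ++ Φ₂ ++ S₂).trans hΞ.symm
      obtain ⟨Ξ₁, Ξ₂, hΞ', hd'⟩ := rebuild_repl
        (fun Γ' Δ' hh => Deriv.andL2 Γ' Δ' A₁ A₂ C hh) hξ hd
      refine ⟨Ξ₁, Ξ₂, ?_, hd'⟩
      rw [hΞ', hf]; simp
    · simp at hf
    · obtain ⟨n, hn, -⟩ := hQ.a2 _ (mem_of_split hf); simp at hn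
    · have hLA : Locked A₂ := by
        rcases hQ.l2 _ (mem_of_split hf) with ⟨r, A', hEq⟩ | ⟨r, s, B', C', hEq⟩
        · simp at hEq
        · injection hEq with hh1 hh2; exact Or.inl ⟨s, C', hh2⟩
      have hls : LockedSeq (D₁ ++ [A₂] ++ D₂) := by
        intro x hx
        simp only [List.mem_append, List.mem_singleton] at hx
        rcases hx with (hx | rfl) | hx
        · exact hQ.l2 _ (by rw [hf]; simp [hx])
        · exact hLA
        · exact hQ.l2 _ (by rw [hf]; simp [hx])
      have hc5' : ∀ ψ S', D₁ ++ [A₂] ++ D₂ = ψ :: S' → (Φ₁ = [] ∧ Φ₂ = []) ∨ S₁ ≠ [] ∨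
          ψ = Fm.lDiv (Fm.atom b) E := by
        intro ψ S' hS'
        rcases D₁ with _ | ⟨c, D₁'⟩
        · simp at hS'
          rcases hQ.c5 (Fm.and A₁ A₂) D₂ (by rw [hf]; simp) with h' | h' | h'
          · exact Or.inl h'
          · exact Or.inr (Or.inl h')
          · simp at h'
        · simp only [List.cons_append, List.cons.injEq] at hS'
          exact hS'.1 ▸ hQ.c5 c (D₁' ++ [Fm.and A₁ A₂] ++ D₂) (by rw [hf]; simp)
      obtain ⟨ξ₁, ξ₂, hΞ, hd⟩ := ih Φ₁ S₁ Φ₂ (D₁ ++ [A₂] ++ D₂) (by rw [he1, he2]; simp)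
        ⟨hQ.a1, hQ.a2, hQ.l1, hls, hQ.c3, hQ.c4, hc5'⟩ hOk
      have hξ : (Φ₁ ++ S₁ ++ Φ₂ ++ D₁) ++ [A₂] ++ D₂ = ξ₁ ++ ξ₂ :=
        (by simp : (Φ₁ ++ S₁ ++ Φ₂ ++ D₁) ++ [A₂] ++ D₂ =
          Φ₁ ++ S₁ ++ Φ₂ ++ (D₁ ++ [A₂] ++ D₂)).trans hΞ.symm
      obtain ⟨Ξ₁, Ξ₂, hΞ', hd'⟩ := rebuild_repl
        (fun Γ' Δ' hh => Deriv.andL2 Γ' Δ' A₁ A₂ C hh) hξ hd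
      refine ⟨Ξ₁, Ξ₂, ?_, hd'⟩
      rw [hΞ', hf]; simp
  | andR Pi A₁ A₂ h1 h2 ih1 ih2 =>
    intro Φ₁ S₁ Φ₂ S₂ hΛ hQ hOk
    rcases hOk with ⟨q, hq⟩ | hq <;> simp at hq
  | orL Γ Δ A₁ A₂ C h1 h2 ih1 ih2 =>
    intro Φ₁ S₁ Φ₂ S₂ hΛ hQ hOk
    have hm : Fm.or A₁ A₂ ∈ Φ₁ ++ S₁ ++ [Fm.nabla B] ++ Φ₂ ++ S₂ := by rw [← hΛ]; simp
    rcases shapeN hQ hm with ⟨n, h'⟩ | ⟨x, y, h'⟩ | ⟨x, y, h'⟩ | h' <;> simp at h'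
  | orR1 Pi A₁ A₂ h ih =>
    intro Φ₁ S₁ Φ₂ S₂ hΛ hQ hOk
    rcases hOk with ⟨q, hq⟩ | hq <;> simp at hq
  | orR2 Pi A₁ A₂ h ih =>
    intro Φ₁ S₁ Φ₂ S₂ hΛ hQ hOk
    rcases hOk with ⟨q, hq⟩ | hq <;> simp at hq
  | zeroL Γ Δ C =>
    intro Φ₁ S₁ Φ₂ S₂ hΛ hQ hOk
    have hm : Fm.zero ∈ Φ₁ ++ S₁ ++ [Fm.nabla B] ++ Φ₂ ++ S₂ := by rw [← hΛ]; simp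
    rcases shapeN hQ hm with ⟨n, h'⟩ | ⟨x, y, h'⟩ | ⟨x, y, h'⟩ | h' <;> simp at h'
  | oneL Γ Δ C h ih =>
    intro Φ₁ S₁ Φ₂ S₂ hΛ hQ hOk
    have hm : Fm.one ∈ Φ₁ ++ S₁ ++ [Fm.nabla B] ++ Φ₂ ++ S₂ := by rw [← hΛ]; simp
    rcases shapeN hQ hm with ⟨n, h'⟩ | ⟨x, y, h'⟩ | ⟨x, y, h'⟩ | h' <;> simp at h'
  | oneR =>
    intro Φ₁ S₁ Φ₂ S₂ hΛ hQ hOk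
    have : Fm.nabla B ∈ ([] : List Fm) := by rw [hΛ]; simp
    simp at this
  | bangL n Γ Δ A B0 h ih =>
    intro Φ₁ S₁ Φ₂ S₂ hΛ hQ hOk
    have hm : Fm.bang A ∈ Φ₁ ++ S₁ ++ [Fm.nabla B] ++ Φ₂ ++ S₂ := by rw [← hΛ]; simp
    rcases shapeN hQ hm with ⟨n', h'⟩ | ⟨x, y, h'⟩ | ⟨x, y, h'⟩ | h' <;> simp at h'
  | bangR A B0 h ih =>
    intro Φ₁ S₁ Φ₂ S₂ hΛ hQ hOk
    rcases hOk with ⟨q, hq⟩ | hq <;> simp at hq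
  | starL Γ Δ A B0 h ih =>
    intro Φ₁ S₁ Φ₂ S₂ hΛ hQ hOk
    have hm : Fm.star A ∈ Φ₁ ++ S₁ ++ [Fm.nabla B] ++ Φ₂ ++ S₂ := by rw [← hΛ]; simp
    rcases shapeN hQ hm with ⟨n, h'⟩ | ⟨x, y, h'⟩ | ⟨x, y, h'⟩ | h' <;> simp at h'
  | starR Ps A h ih =>
    intro Φ₁ S₁ Φ₂ S₂ hΛ hQ hOk
    rcases hOk with ⟨q, hq⟩ | hq <;> simp at hq
  | nablaL Γ Δ A B0 h ih =>
    intro Φ₁ S₁ Φ₂ S₂ hΛ hQ hOk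
    rcases locate5 hΛ with ⟨A₁, A₂, hf, he1, he2⟩ | ⟨B₁, B₂, hf, he1, he2⟩ |
      ⟨hf, he1, he2⟩ | ⟨C₁, C₂, hf, he1, he2⟩ | ⟨D₁, D₂, hf, he1, he2⟩
    · obtain ⟨n, hn, -⟩ := hQ.a1 _ (mem_of_split hf); simp at hn
    · rcases hQ.l1 _ (mem_of_split hf) with ⟨r, A', hEq⟩ | ⟨r, s, B', C', hEq⟩ <;> simp at hEq
    · injection hf with hAB
      subst hAB
      exact ⟨Γ, Δ, by rw [he1, he2]; simp, by simpa using h⟩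
    · obtain ⟨n, hn, -⟩ := hQ.a2 _ (mem_of_split hf); simp at hn
    · rcases hQ.l2 _ (mem_of_split hf) with ⟨r, A', hEq⟩ | ⟨r, s, B', C', hEq⟩ <;> simp at hEq
  | nablaR A B0 h ih =>
    intro Φ₁ S₁ Φ₂ S₂ hΛ hQ hOk
    rcases hOk with ⟨q, hq⟩ | hq <;> simp at hq
  | nablaP1 Γ Pi Δ A B0 h ih =>
    intro Φ₁ S₁ Φ₂ S₂ hΛ hQ hOk
    have hΛ' : Γ ++ [Fm.nabla A] ++ (Pi ++ Δ) = Φ₁ ++ S₁ ++ [Fm.nabla B] ++ Φ₂ ++ S₂ := by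
      rw [← hΛ]; simp
    rcases locate5 hΛ' with ⟨A₁, A₂, hf, he1, he2⟩ | ⟨B₁, B₂, hf, he1, he2⟩ |
      ⟨hf, he1, he2⟩ | ⟨C₁, C₂, hf, he1, he2⟩ | ⟨D₁, D₂, hf, he1, he2⟩
    · obtain ⟨n, hn, -⟩ := hQ.a1 _ (mem_of_split hf); simp at hn
    · rcases hQ.l1 _ (mem_of_split hf) with ⟨r, A', hEq⟩ | ⟨r, s, B', C', hEq⟩ <;> simp at hEq
    · injection hf with hAB
      subst hAB
      rcases List.append_eq_append_iff.mp he2 with ⟨u, hu1, hu2⟩ | ⟨u, hu1, hu2⟩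
      · -- hu1 : Φ₂ = Pi ++ u, hu2 : Δ = u ++ S₂
        rcases Pi with _ | ⟨c, Pi⟩
        · -- Pi = []
          have hc3' : S₁ ≠ [] → u = [] := by
            intro hs
            have h0 : ([] : List Fm) ++ u = [] := hu1.symm.trans (hQ.c3 hs)
            simpa using h0
          have hc5' : ∀ ψ S', S₂ = ψ :: S' → (Φ₁ = [] ∧ u = []) ∨ S₁ ≠ [] ∨
              ψ = Fm.lDiv (Fm.atom b) E := by
            intro ψ S' hS'
            rcases hQ.c5 ψ S' hS' with ⟨h1', h2'⟩ | hs | hE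
            · refine Or.inl ⟨h1', ?_⟩
              have h0 : ([] : List Fm) ++ u = [] := hu1.symm.trans h2'
              simpa using h0
            · exact Or.inr (Or.inl hs)
            · exact Or.inr (Or.inr hE)
          obtain ⟨Ξ₁, Ξ₂, hΞ, hd⟩ := ih Φ₁ S₁ u S₂ (by simp [he1, hu2])
            ⟨hQ.a1, hQ.a2.sub (fun x hx => by rw [hu1]; exact List.mem_append_right _ hx),
             hQ.l1, hQ.l2, hc3', hQ.c4, hc5'⟩ hOk
          exact ⟨Ξ₁, Ξ₂, by simp [hΞ, hu1], hd⟩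
        · -- Pi = c :: Pi ≠ []
          have hΦ₂ : Φ₂ ≠ [] := by rw [hu1]; simp
          have hS1 : S₁ = [] := by
            by_contra hs; exact hΦ₂ (hQ.c3 hs)
          have hc5' : ∀ ψ S', S₂ = ψ :: S' → (Φ₁ ++ (c :: Pi) = [] ∧ u = []) ∨
              (([] : List Fm) ≠ []) ∨ ψ = Fm.lDiv (Fm.atom b) E := by
            intro ψ S' hS'
            rcases hQ.c5 ψ S' hS' with ⟨h1', h2'⟩ | hs | hE
            · exact absurd h2' hΦ₂
            · exact absurd (hQ.c3 hs) hΦ₂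
            · exact Or.inr (Or.inr hE)
          obtain ⟨Ξ₁, Ξ₂, hΞ, hd⟩ := ih (Φ₁ ++ (c :: Pi)) [] u S₂
            (by simp [he1, hu2, hS1])
            ⟨hQ.a1.app (hQ.a2.sub (fun x hx => by
                rw [hu1]; exact List.mem_append_left _ hx)),
             hQ.a2.sub (fun x hx => by rw [hu1]; exact List.mem_append_right _ hx),
             LockedSeq.nil, hQ.l2,
             fun hs => absurd rfl hs, fun _ _ hh => absurd hh.symm (List.cons_ne_nil _ _),
             hc5'⟩ hOk
          exact ⟨Ξ₁, Ξ₂, by simp [hΞ, hu1, hS1], hd⟩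
      · -- hu1 : Pi = Φ₂ ++ u, hu2 : S₂ = u ++ Δ
        rcases u with _ | ⟨c, u⟩
        · -- u = [] : Pi = Φ₂
          simp only [List.append_nil] at hu1
          rcases Classical.em (S₁ = []) with hS1 | hS1
          · have hc5' : ∀ ψ S', Δ = ψ :: S' → (Φ₁ ++ Φ₂ = [] ∧ ([] : List Fm) = []) ∨
                (([] : List Fm) ≠ []) ∨ ψ = Fm.lDiv (Fm.atom b) E := by
              intro ψ S' hS'
              rcases hQ.c5 ψ S' (by rw [hu2, hS']; simp) with ⟨h1', h2'⟩ | hs | hE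
              · exact Or.inl ⟨by simp [h1', h2'], rfl⟩
              · exact absurd hS1 hs
              · exact Or.inr (Or.inr hE)
            obtain ⟨Ξ₁, Ξ₂, hΞ, hd⟩ := ih (Φ₁ ++ Φ₂) [] [] Δ
              (by simp [he1, hu1, hS1])
              ⟨hQ.a1.app hQ.a2, ANB.nil, LockedSeq.nil,
               hQ.l2.sub (fun x hx => by rw [hu2]; exact List.mem_append_right _ hx),
               fun hs => rfl, fun _ _ hh => absurd hh.symm (List.cons_ne_nil _ _), hc5'⟩ hOk
            exact ⟨Ξ₁, Ξ₂, by simp [hΞ, hS1, hu2], hd⟩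
          · have hΦ₂ : Φ₂ = [] := hQ.c3 hS1
            obtain ⟨Ξ₁, Ξ₂, hΞ, hd⟩ := ih Φ₁ S₁ [] Δ
              (by simp [he1, hu1, hΦ₂])
              ⟨hQ.a1, ANB.nil, hQ.l1,
               hQ.l2.sub (fun x hx => by rw [hu2]; exact List.mem_append_right _ hx),
               fun _ => rfl, hQ.c4,
               fun ψ S' hS' => Or.inr (Or.inl hS1)⟩ hOk
            exact ⟨Ξ₁, Ξ₂, by simp [hΞ, hΦ₂, hu2], hd⟩
        · -- u = c :: u, a nonempty prefix of the locked S₂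
          have hlu : LockedSeq (c :: u) :=
            hQ.l2.sub (fun x hx => by rw [hu2]; exact List.mem_append_left _ hx)
          have hcu : ∀ ψ S', (c :: u : List Fm) = ψ :: S' →
              (Φ₁ = [] ∧ Φ₂ = []) ∨ S₁ ≠ [] ∨ ψ = Fm.lDiv (Fm.atom b) E := by
            intro ψ S' hS'
            injection hS' with hh1 hh2
            exact hQ.c5 ψ (u ++ Δ) (by rw [hu2, hh1]; simp)
          rcases Classical.em (Φ₂ = []) with hΦ₂ | hΦ₂
          · have hc4' : ∀ ψ S', S₁ ++ (c :: u) = ψ :: S' → Φ₁ = [] ∨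
                ψ = Fm.lDiv (Fm.atom b) E := by
              intro ψ S' hS'
              rcases S₁ with _ | ⟨d, S₁'⟩
              · simp only [List.nil_append] at hS'
                injection hS' with hh1 hh2
                rcases hcu c u rfl with ⟨h1', h2'⟩ | hs | hE
                · exact Or.inl h1'
                · exact absurd rfl hs
                · exact Or.inr (hh1 ▸ hE)
              · simp only [List.cons_append, List.cons.injEq] at hS'
                exact hS'.1 ▸ hQ.c4 d S₁' rfl
            obtain ⟨Ξ₁, Ξ₂, hΞ, hd⟩ := ih Φ₁ (S₁ ++ (c :: u)) [] Δ
              (by simp [he1, hu1, hΦ₂])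
              ⟨hQ.a1, ANB.nil, hQ.l1.app hlu,
               hQ.l2.sub (fun x hx => by rw [hu2]; exact List.mem_append_right _ hx),
               fun _ => rfl, hc4', fun ψ S' hS' => Or.inr (Or.inl (by simp))⟩ hOk
            exact ⟨Ξ₁, Ξ₂, by simp [hΞ, hΦ₂, hu2], hd⟩
          · have hS1 : S₁ = [] := by
              by_contra hs; exact hΦ₂ (hQ.c3 hs)
            have hc4' : ∀ ψ S', (c :: u : List Fm) = ψ :: S' → Φ₁ ++ Φ₂ = [] ∨
                ψ = Fm.lDiv (Fm.atom b) E := by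
              intro ψ S' hS'
              rcases hcu ψ S' hS' with ⟨h1', h2'⟩ | hs | hE
              · exact Or.inl (by simp [h1', h2'])
              · exact absurd hS1 hs
              · exact Or.inr hE
            obtain ⟨Ξ₁, Ξ₂, hΞ, hd⟩ := ih (Φ₁ ++ Φ₂) (c :: u) [] Δ
              (by simp [he1, hu1, hS1])
              ⟨hQ.a1.app hQ.a2, ANB.nil, hlu,
               hQ.l2.sub (fun x hx => by rw [hu2]; exact List.mem_append_right _ hx),
               fun _ => rfl, hc4', fun ψ S' hS' => Or.inr (Or.inl (by simp))⟩ hOk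
            exact ⟨Ξ₁, Ξ₂, by simp [hΞ, hS1, hu2], hd⟩
    · obtain ⟨n, hn, -⟩ := hQ.a2 _ (mem_of_split hf); simp at hn
    · rcases hQ.l2 _ (mem_of_split hf) with ⟨r, A', hEq⟩ | ⟨r, s, B', C', hEq⟩ <;> simp at hEq
  | nablaP2 Γ Pi Δ A B0 h ih =>
    intro Φ₁ S₁ Φ₂ S₂ hΛ hQ hOk
    have hΛ' : (Γ ++ Pi) ++ [Fm.nabla A] ++ Δ = Φ₁ ++ S₁ ++ [Fm.nabla B] ++ Φ₂ ++ S₂ := hΛ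
    rcases locate5 hΛ' with ⟨A₁, A₂, hf, he1, he2⟩ | ⟨B₁, B₂, hf, he1, he2⟩ |
      ⟨hf, he1, he2⟩ | ⟨C₁, C₂, hf, he1, he2⟩ | ⟨D₁, D₂, hf, he1, he2⟩
    · obtain ⟨n, hn, -⟩ := hQ.a1 _ (mem_of_split hf); simp at hn
    · rcases hQ.l1 _ (mem_of_split hf) with ⟨r, A', hEq⟩ | ⟨r, s, B', C', hEq⟩ <;> simp at hEq
    · injection hf with hAB
      subst hAB
      rcases List.append_eq_append_iff.mp he1 with ⟨u, hu1, hu2⟩ | ⟨u, hu1, hu2⟩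
      · -- hu1 : Φ₁ = Γ ++ u, hu2 : Pi = u ++ S₁  (u is a suffix of the atoms Φ₁)
        rcases Classical.em (S₁ = []) with hS1 | hS1
        · have hc5' : ∀ ψ S', S₂ = ψ :: S' → (Γ = [] ∧ u ++ Φ₂ = []) ∨
              (([] : List Fm) ≠ []) ∨ ψ = Fm.lDiv (Fm.atom b) E := by
            intro ψ S' hS'
            rcases hQ.c5 ψ S' hS' with ⟨h1', h2'⟩ | hs | hE
            · have h0 : Γ ++ u = [] := hu1.symm.trans h1'
              exact Or.inl ⟨(List.append_eq_nil_iff.mp h0).1,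
                by simp [(List.append_eq_nil_iff.mp h0).2, h2']⟩
            · exact absurd hS1 hs
            · exact Or.inr (Or.inr hE)
          obtain ⟨Ξ₁, Ξ₂, hΞ, hd⟩ := ih Γ [] (u ++ Φ₂) S₂
            (by simp [he2, hu2, hS1])
            ⟨hQ.a1.sub (fun x hx => by rw [hu1]; exact List.mem_append_left _ hx),
             (hQ.a1.sub (fun x hx => by rw [hu1]; exact List.mem_append_right _ hx)).app hQ.a2,
             LockedSeq.nil, hQ.l2, fun hs => absurd rfl hs,
             fun _ _ hh => absurd hh.symm (List.cons_ne_nil _ _), hc5'⟩ hOk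
          exact ⟨Ξ₁, Ξ₂, by simp [hΞ, hu1, hS1], hd⟩
        · have hΦ₂ : Φ₂ = [] := hQ.c3 hS1
          have hc5' : ∀ ψ S', S₁ ++ S₂ = ψ :: S' → (Γ = [] ∧ u = []) ∨
              (([] : List Fm) ≠ []) ∨ ψ = Fm.lDiv (Fm.atom b) E := by
            intro ψ S' hS'
            rcases S₁ with _ | ⟨d, S₁'⟩
            · exact absurd rfl hS1
            · simp only [List.cons_append, List.cons.injEq] at hS'
              rcases hQ.c4 d S₁' rfl with hΦ | hE
              · have h0 : Γ ++ u = [] := hu1.symm.trans hΦ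
                exact Or.inl ⟨(List.append_eq_nil_iff.mp h0).1, (List.append_eq_nil_iff.mp h0).2⟩
              · exact Or.inr (Or.inr (hS'.1 ▸ hE))
          obtain ⟨Ξ₁, Ξ₂, hΞ, hd⟩ := ih Γ [] u (S₁ ++ S₂)
            (by simp [he2, hu2, hΦ₂])
            ⟨hQ.a1.sub (fun x hx => by rw [hu1]; exact List.mem_append_left _ hx),
             hQ.a1.sub (fun x hx => by rw [hu1]; exact List.mem_append_right _ hx),
             LockedSeq.nil, hQ.l1.app hQ.l2, fun hs => absurd rfl hs,
             fun _ _ hh => absurd hh.symm (List.cons_ne_nil _ _), hc5'⟩ hOk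
          exact ⟨Ξ₁, Ξ₂, by simp [hΞ, hu1, hΦ₂], hd⟩
      · -- hu1 : Γ = Φ₁ ++ u, hu2 : S₁ = u ++ Pi  (u, Pi locked)
        rcases u with _ | ⟨c, u⟩
        · simp only [List.nil_append] at hu2
          rcases Pi with _ | ⟨d, Pi⟩
          · obtain ⟨Ξ₁, Ξ₂, hΞ, hd⟩ := ih Φ₁ [] Φ₂ S₂
              (by simp [he2, hu1, hu2])
              ⟨hQ.a1, hQ.a2, LockedSeq.nil, hQ.l2, fun hs => absurd rfl hs,
               fun _ _ hh => absurd hh.symm (List.cons_ne_nil _ _),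
               fun ψ S' hS' => (hQ.c5 ψ S' hS').imp id
                 (Or.imp (fun hs => absurd hu2 hs) id)⟩ hOk
            exact ⟨Ξ₁, Ξ₂, by simp [hΞ, hu2], hd⟩
          · have hS1 : S₁ ≠ [] := by rw [hu2]; simp
            have hΦ₂ : Φ₂ = [] := hQ.c3 hS1
            have hc5' : ∀ ψ S', (d :: Pi) ++ S₂ = ψ :: S' →
                (Φ₁ = [] ∧ ([] : List Fm) = []) ∨
                (([] : List Fm) ≠ []) ∨ ψ = Fm.lDiv (Fm.atom b) E := by
              intro ψ S' hS'
              simp only [List.cons_append, List.cons.injEq] at hS'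
              rcases hQ.c4 d Pi hu2 with hΦ | hE
              · exact Or.inl ⟨hΦ, rfl⟩
              · exact Or.inr (Or.inr (hS'.1 ▸ hE))
            obtain ⟨Ξ₁, Ξ₂, hΞ, hd⟩ := ih Φ₁ [] [] ((d :: Pi) ++ S₂)
              (by simp [he2, hu1, hΦ₂])
              ⟨hQ.a1, ANB.nil, LockedSeq.nil,
               (hQ.l1.sub (fun x hx => by rw [hu2]; exact hx)).app hQ.l2,
               fun hs => rfl, fun _ _ hh => absurd hh.symm (List.cons_ne_nil _ _), hc5'⟩ hOk
            exact ⟨Ξ₁, Ξ₂, by simp [hΞ, hu2, hΦ₂], hd⟩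
        · -- u = c :: u ≠ []
          have hS1 : S₁ ≠ [] := by rw [hu2]; simp
          have hΦ₂ : Φ₂ = [] := hQ.c3 hS1
          have hc4' : ∀ ψ S', (c :: u : List Fm) = ψ :: S' → Φ₁ = [] ∨
              ψ = Fm.lDiv (Fm.atom b) E := by
            intro ψ S' hS'
            injection hS' with hh1 hh2
            exact (hQ.c4 ψ (u ++ Pi) (by simp [hu2, hh1])).imp id id
          obtain ⟨Ξ₁, Ξ₂, hΞ, hd⟩ := ih Φ₁ (c :: u) [] (Pi ++ S₂)
            (by simp [he2, hu1, hΦ₂])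
            ⟨hQ.a1, ANB.nil,
             hQ.l1.sub (fun x hx => by rw [hu2]; exact List.mem_append_left _ hx),
             (hQ.l1.sub (fun x hx => by rw [hu2]; exact List.mem_append_right _ hx)).app hQ.l2,
             fun _ => rfl, hc4',
             fun ψ S' hS' => Or.inr (Or.inl (by simp))⟩ hOk
          exact ⟨Ξ₁, Ξ₂, by simp [hΞ, hu2, hΦ₂], hd⟩
    · obtain ⟨n, hn, -⟩ := hQ.a2 _ (mem_of_split hf); simp at hn
    · rcases hQ.l2 _ (mem_of_split hf) with ⟨r, A', hEq⟩ | ⟨r, s, B', C', hEq⟩ <;> simp at hEq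
end LemN
section Assembly

lemma nabla_move {Ξ₁ Ξ₂ Θ₁ Θ₂ : List Fm} {A C : Fm} (he : Ξ₁ ++ Ξ₂ = Θ₁ ++ Θ₂)
    (hd : Deriv (Ξ₁ ++ [Fm.nabla A] ++ Ξ₂) C) : Deriv (Θ₁ ++ [Fm.nabla A] ++ Θ₂) C := by
  rcases List.append_eq_append_iff.mp he with ⟨t, ht1, ht2⟩ | ⟨t, ht1, ht2⟩
  · have := Deriv.nablaP2 Ξ₁ t Θ₂ A C (by rw [ht2] at hd; simpa using hd)
    rw [ht1]; simpa using this
  · have := Deriv.nablaP1 Θ₁ t Ξ₂ A C (by rw [ht1] at hd; simpa using hd)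
    rw [ht2]; simpa using this

lemma lDivFold_intro : ∀ (ps : List ℕ) (Θ₁' Θ₂ : List Fm) (B C : Fm),
    Deriv (Θ₁' ++ [B] ++ Θ₂) C →
    Deriv (Θ₁' ++ ps.map Fm.atom ++ [lDivFold ps B] ++ Θ₂) C := by
  intro ps
  induction ps using List.reverseRecOn with
  | nil => intro Θ₁' Θ₂ B C hd; simpa [lDivFold] using hd
  | append_singleton qs p ih =>
    intro Θ₁' Θ₂ B C hd
    have h1 := ih Θ₁' Θ₂ B C hd
    have h2 := Deriv.lDivL (Θ₁' ++ qs.map Fm.atom) [Fm.atom p] Θ₂ (lDivFold qs B)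
      (Fm.atom p) C (by simpa using h1) (Deriv.ax _)
    have hfold : lDivFold (qs ++ [p]) B = Fm.lDiv (Fm.atom p) (lDivFold qs B) := by
      simp [lDivFold]
    rw [hfold]
    simpa using h2

lemma top_decomp {Θ₁ Θ₂ Γ Ψ' : List Fm} {b : ℕ} {E : Fm}
    (hsplit : Θ₁ ++ Θ₂ = Γ ++ (Fm.lDiv (Fm.atom b) E :: Ψ'))
    (hΓ : PrimSeq Γ) (hΨ : LockedSeq (Fm.lDiv (Fm.atom b) E :: Ψ'))
    (hb : Fm.atom b ∉ Γ) :
    ∃ Φ₁ S₁ Φ₂ S₂, Θ₁ = Φ₁ ++ S₁ ∧ Θ₂ = Φ₂ ++ S₂ ∧ QG b E Φ₁ S₁ Φ₂ S₂ := by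
  have hΓ' : ANB b Γ := by
    intro x hx
    obtain ⟨n, rfl⟩ := hΓ x hx
    exact ⟨n, rfl, fun hnb => hb (hnb ▸ hx)⟩
  rcases List.append_eq_append_iff.mp hsplit with ⟨t, ht1, ht2⟩ | ⟨t, ht1, ht2⟩
  · -- Γ = Θ₁ ++ t, Θ₂ = t ++ Ψ
    refine ⟨Θ₁, [], t, Fm.lDiv (Fm.atom b) E :: Ψ', by simp, ht2, ?_⟩
    refine ⟨hΓ'.sub (fun x hx => by rw [ht1]; exact List.mem_append_left _ hx),
      hΓ'.sub (fun x hx => by rw [ht1]; exact List.mem_append_right _ hx),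
      LockedSeq.nil, hΨ, fun hc => absurd rfl hc,
      fun _ _ hh => absurd hh.symm (List.cons_ne_nil _ _), ?_⟩
    intro ψ S' hS'
    injection hS' with hh1 hh2
    exact Or.inr (Or.inr hh1.symm)
  · -- Θ₁ = Γ ++ t, Ψ = t ++ Θ₂
    refine ⟨Γ, t, [], Θ₂, ht1, by simp, ?_⟩
    refine ⟨hΓ', ANB.nil, hΨ.sub (fun x hx => by rw [ht2]; exact List.mem_append_left _ hx),
      hΨ.sub (fun x hx => by rw [ht2]; exact List.mem_append_right _ hx),
      fun _ => rfl, ?_, ?_⟩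
    · intro ψ S' hS'
      rw [hS'] at ht2
      injection ht2 with hh1 hh2
      exact Or.inr hh1.symm
    · intro ψ S' hS'
      rcases t with _ | ⟨c, t'⟩
      · simp only [List.nil_append] at ht2
        rw [hS'] at ht2
        injection ht2 with hh1 hh2
        exact Or.inr (Or.inr hh1.symm)
      · exact Or.inr (Or.inl (by simp))

lemma step_b {Θ₁ Θ₂ Γ Ψ' : List Fm} {b p : ℕ} {E X : Fm}
    (hsplit : Θ₁ ++ Θ₂ = Γ ++ (Fm.lDiv (Fm.atom b) E :: Ψ'))
    (hΓ : PrimSeq Γ) (hΨ : LockedSeq (Fm.lDiv (Fm.atom b) E :: Ψ'))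
    (hb : Fm.atom b ∉ Γ)
    (hd : Deriv (Θ₁ ++ [Fm.lDiv (Fm.atom p) X] ++ Θ₂) (Fm.mul aL okF)) :
    ∃ Θ₁'', Θ₁ = Θ₁'' ++ [Fm.atom p] ∧ Deriv (Θ₁'' ++ [X] ++ Θ₂) (Fm.mul aL okF) := by
  obtain ⟨Φ₁, S₁, Φ₂, S₂, h1, h2, hQ⟩ := top_decomp hsplit hΓ hΨ hb
  obtain ⟨hS1, Φ', hΦ', hd'⟩ := lemM b p E X hd Φ₁ S₁ Φ₂ S₂
    (by rw [h1, h2]; simp) hQ (Or.inr rfl)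
  exact ⟨Φ', by rw [h1, hS1, hΦ']; simp, by rw [h2]; simpa using hd'⟩

lemma transfer {Θ₁'' Θ₂ Γ Ψ' : List Fm} {b p : ℕ} {E : Fm}
    (hsplit : (Θ₁'' ++ [Fm.atom p]) ++ Θ₂ = Γ ++ (Fm.lDiv (Fm.atom b) E :: Ψ'))
    (hΓ : PrimSeq Γ) (hΨ : LockedSeq (Fm.lDiv (Fm.atom b) E :: Ψ'))
    (hb : Fm.atom b ∉ Γ) :
    ∃ Γ', Θ₁'' ++ Θ₂ = Γ' ++ (Fm.lDiv (Fm.atom b) E :: Ψ') ∧ PrimSeq Γ' ∧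
      Fm.atom b ∉ Γ' := by
  have hsplit' : Θ₁'' ++ [Fm.atom p] ++ Θ₂ = Γ ++ (Fm.lDiv (Fm.atom b) E :: Ψ') := by
    simpa using hsplit
  rcases cons_split hsplit' with ⟨t, ht1, ht2⟩ | ⟨t, ht1, ht2⟩
  · refine ⟨Θ₁'' ++ t, by rw [ht2]; simp, ?_, ?_⟩
    · intro x hx
      rcases List.mem_append.mp hx with h | h
      · exact hΓ x (by rw [ht1]; simp [h])
      · exact hΓ x (by rw [ht1]; simp [h])
    · intro hx
      rcases List.mem_append.mp hx with h | h
      · exact hb (by rw [ht1]; simp [h])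
      · exact hb (by rw [ht1]; simp [h])
  · exact absurd (hΨ (Fm.atom p) (by rw [ht2]; simp)) not_locked_atom

lemma partb (b : ℕ) (E : Fm) : ∀ (ps : List ℕ) (Θ₁ Θ₂ Γ Ψ' : List Fm) (B : Fm),
    Θ₁ ++ Θ₂ = Γ ++ (Fm.lDiv (Fm.atom b) E :: Ψ') → PrimSeq Γ →
    LockedSeq (Fm.lDiv (Fm.atom b) E :: Ψ') → Fm.atom b ∉ Γ →
    Deriv (Θ₁ ++ [lDivFold ps B] ++ Θ₂) (Fm.mul aL okF) →
    ∃ Θ₁', Θ₁ = Θ₁' ++ ps.map Fm.atom ∧ Deriv (Θ₁' ++ [B] ++ Θ₂) (Fm.mul aL okF) := by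
  intro ps
  induction ps using List.reverseRecOn with
  | nil =>
    intro Θ₁ Θ₂ Γ Ψ' B hsplit hΓ hΨ hb hd
    exact ⟨Θ₁, by simp, by simpa [lDivFold] using hd⟩
  | append_singleton qs p ih =>
    intro Θ₁ Θ₂ Γ Ψ' B hsplit hΓ hΨ hb hd
    have hfold : lDivFold (qs ++ [p]) B = Fm.lDiv (Fm.atom p) (lDivFold qs B) := by
      simp [lDivFold]
    rw [hfold] at hd
    obtain ⟨Θ₁'', hΘ, hd'⟩ := step_b hsplit hΓ hΨ hb hd
    rw [hΘ] at hsplit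
    obtain ⟨Γ', hsplit', hΓ', hb'⟩ := transfer hsplit hΓ hΨ hb
    obtain ⟨Θ₁', hΘ', hd''⟩ := ih Θ₁'' Θ₂ Γ' Ψ' B hsplit' hΓ' hΨ hb' hd'
    exact ⟨Θ₁', by rw [hΘ, hΘ']; simp, hd''⟩

end Assembly

/-- bottom-top analysis, part 2. -/
theorem bottom_top_analysis_part2 (Θ₁ Θ₂ Γ Ψ' : List Fm) (b : ℕ) (E : Fm)
    (hsplit : Θ₁ ++ Θ₂ = Γ ++ (Fm.lDiv (Fm.atom b) E :: Ψ'))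
    (hΓ : PrimSeq Γ) (hΨ : LockedSeq (Fm.lDiv (Fm.atom b) E :: Ψ'))
    (hb : Fm.atom b ∉ Γ) :
    (∀ B : Fm,
        Deriv (Θ₁ ++ [Fm.nabla B] ++ Θ₂) (Fm.mul aL okF) ↔
        ∃ Ξ₁ Ξ₂ : List Fm, Ξ₁ ++ Ξ₂ = Θ₁ ++ Θ₂ ∧
          Deriv (Ξ₁ ++ [B] ++ Ξ₂) (Fm.mul aL okF)) ∧
    (∀ (ps : List ℕ) (B : Fm),
        Deriv (Θ₁ ++ [lDivFold ps B] ++ Θ₂) (Fm.mul aL okF) ↔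
        ∃ Θ₁' : List Fm, Θ₁ = Θ₁' ++ ps.map Fm.atom ∧
          Deriv (Θ₁' ++ [B] ++ Θ₂) (Fm.mul aL okF)) := by
  constructor
  · intro B
    constructor
    · intro hd
      obtain ⟨Φ₁, S₁, Φ₂, S₂, h1, h2, hQ⟩ := top_decomp hsplit hΓ hΨ hb
      obtain ⟨Ξ₁, Ξ₂, hΞ, hd'⟩ := lemN b E B hd Φ₁ S₁ Φ₂ S₂
        (by rw [h1, h2]; simp) hQ (Or.inr rfl)
      exact ⟨Ξ₁, Ξ₂, by rw [h1, h2]; simpa using hΞ, hd'⟩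
    · rintro ⟨Ξ₁, Ξ₂, hΞ, hd⟩
      exact nabla_move hΞ (Deriv.nablaL Ξ₁ Ξ₂ B _ hd)
  · intro ps B
    constructor
    · intro hd
      exact partb b E ps Θ₁ Θ₂ Γ Ψ' B hsplit hΓ hΨ hb hd
    · rintro ⟨Θ₁', hΘ, hd⟩
      rw [hΘ]
      have := lDivFold_intro ps Θ₁' Θ₂ B (Fm.mul aL okF) hd
      simpa using this
end

section
/- Let Γ be a sequence of primitive formulas, let Ψ be a locked sequence of formulas, let n ≥ 1 and let A₁,…,Aₙ be formulas. Then the sequent Γ, A₁∧(A₂∧(…∧Aₙ)), Ψ ⊢ a_L·ok is derivable in the fragment of ACTωm without 0, 1, / and ∨ if and only if Γ, Aᵢ, Ψ ⊢ a_L·ok is derivable for some i ∈ {1,…,n}. -/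
set_option linter.unusedVariables false
set_option linter.unnecessarySeqFocus false
set_option maxHeartbeats 1000000

/-- Right-nested conjunction `A₁∧(A₂∧(…∧Aₙ))` of a nonempty list of formulas. -/
def bigAnd : List Fm → Fm
  | [] => Fm.atom 0
  | [A] => A
  | A :: rest => Fm.and A (bigAnd rest)

/-- Auxiliary: splitting an append around a distinguished element. -/
lemma split_elem {α : Type*} {S1 S2 G P : List α} {a : α}
    (h : S1 ++ S2 = G ++ a :: P) :
    (∃ t, S1 = G ++ a :: t ∧ P = t ++ S2) ∨ (∃ t, G = S1 ++ t ∧ S2 = t ++ a :: P) := by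
  rcases List.append_eq_append_iff.mp h with ⟨t, ht1, ht2⟩ | ⟨t, ht1, ht2⟩
  · exact Or.inr ⟨t, ht1, ht2⟩
  · cases t with
    | nil => exact Or.inr ⟨[], by simpa using ht1.symm, by simpa using ht2.symm⟩
    | cons x t =>
      have hx : a = x ∧ P = t ++ S2 := by simpa using ht2
      exact Or.inl ⟨t, by rw [ht1, hx.1], hx.2⟩

lemma split_mid {α : Type*} {G' D' G P : List α} {x a : α}
    (h : G' ++ x :: D' = G ++ a :: P) :
    (G' = G ∧ x = a ∧ D' = P) ∨
    (∃ t, G' = G ++ a :: t ∧ P = t ++ x :: D') ∨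
    (∃ t, G = G' ++ x :: t ∧ D' = t ++ a :: P) := by
  rcases split_elem (S1 := G') (S2 := x :: D') h with ⟨t, h1, h2⟩ | ⟨t, h1, h2⟩
  · exact Or.inr (Or.inl ⟨t, h1, h2⟩)
  · cases t with
    | nil =>
      have hx : x = a ∧ D' = P := by simpa using h2
      exact Or.inl ⟨by simpa using h1.symm, hx.1, hx.2⟩
    | cons y t =>
      have hy : x = y ∧ D' = t ++ a :: P := by simpa using h2
      exact Or.inr (Or.inr ⟨t, by rw [h1, hy.1], hy.2⟩)

/-- Good succedents: atoms and products of good formulas. -/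
inductive Good : Fm → Prop
  | atom (n : ℕ) : Good (Fm.atom n)
  | mul {X Y : Fm} : Good X → Good Y → Good (Fm.mul X Y)

/-- A locked sequence never derives a good formula. -/
lemma locked_not_good : ∀ {S : List Fm} {C : Fm}, Deriv S C → LockedSeq S → Good C → False := by
  intro S C h
  induction h with
  | ax A =>
    intro hL hG
    rcases hL A (by simp) with ⟨p, A', rfl⟩ | ⟨p, q, B', C', rfl⟩ <;> cases hG
  | lDivL Γ Pi Δ A B C h1 h2 ih1 ih2 =>
    intro hL hG
    rcases hL (Fm.lDiv B A) (by simp) with ⟨p, A', hE⟩ | ⟨p, q, B', C', hE⟩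
    · obtain ⟨hB, -⟩ := Fm.lDiv.inj hE
      exact ih2 (fun F hF => hL F (by simp [hF])) (hB ▸ Good.atom p)
    · simp at hE
  | lDivR Pi A B h ih => intro _ hG; cases hG
  | rDivL Γ Pi Δ A B C h1 h2 ih1 ih2 =>
    intro hL _
    rcases hL (Fm.rDiv A B) (by simp) with ⟨p, A', hE⟩ | ⟨p, q, B', C', hE⟩ <;> simp at hE
  | rDivR Pi A B h ih => intro _ hG; cases hG
  | mulL Γ Δ A B C h ih =>
    intro hL _
    rcases hL (Fm.mul A B) (by simp) with ⟨p, A', hE⟩ | ⟨p, q, B', C', hE⟩ <;> simp at hE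
  | mulR Γ Δ A B h1 h2 ih1 ih2 =>
    intro hL hG
    cases hG with
    | mul g1 g2 => exact ih1 (fun F hF => hL F (by simp [hF])) g1
  | andL1 Γ Δ A1 A2 C h ih =>
    intro hL hG
    rcases hL (Fm.and A1 A2) (by simp) with ⟨p, A', hE⟩ | ⟨p, q, B', C', hE⟩
    · simp at hE
    · obtain ⟨h1', h2'⟩ := Fm.and.inj hE
      refine ih (fun F hF => ?_) hG
      simp only [List.append_assoc, List.singleton_append, List.mem_append, List.mem_cons] at hF
      rcases hF with h' | h' | h'
      · exact hL F (by simp [h'])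
      · exact Or.inl ⟨p, B', by rw [h', h1']⟩
      · exact hL F (by simp [h'])
  | andL2 Γ Δ A1 A2 C h ih =>
    intro hL hG
    rcases hL (Fm.and A1 A2) (by simp) with ⟨p, A', hE⟩ | ⟨p, q, B', C', hE⟩
    · simp at hE
    · obtain ⟨h1', h2'⟩ := Fm.and.inj hE
      refine ih (fun F hF => ?_) hG
      simp only [List.append_assoc, List.singleton_append, List.mem_append, List.mem_cons] at hF
      rcases hF with h' | h' | h'
      · exact hL F (by simp [h'])
      · exact Or.inl ⟨q, C', by rw [h', h2']⟩
      · exact hL F (by simp [h'])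
  | andR Pi A1 A2 h1 h2 ih1 ih2 => intro _ hG; cases hG
  | orL Γ Δ A1 A2 C h1 h2 ih1 ih2 =>
    intro hL _
    rcases hL (Fm.or A1 A2) (by simp) with ⟨p, A', hE⟩ | ⟨p, q, B', C', hE⟩ <;> simp at hE
  | orR1 Pi A1 A2 h ih => intro _ hG; cases hG
  | orR2 Pi A1 A2 h ih => intro _ hG; cases hG
  | zeroL Γ Δ C =>
    intro hL _
    rcases hL Fm.zero (by simp) with ⟨p, A', hE⟩ | ⟨p, q, B', C', hE⟩ <;> simp at hE
  | oneL Γ Δ C h ih =>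
    intro hL _
    rcases hL Fm.one (by simp) with ⟨p, A', hE⟩ | ⟨p, q, B', C', hE⟩ <;> simp at hE
  | oneR => intro _ hG; cases hG
  | bangL n Γ Δ A B h ih =>
    intro hL _
    rcases hL (Fm.bang A) (by simp) with ⟨p, A', hE⟩ | ⟨p, q, B', C', hE⟩ <;> simp at hE
  | bangR A B h ih => intro _ hG; cases hG
  | starL Γ Δ A B h ih =>
    intro hL _
    rcases hL (Fm.star A) (by simp) with ⟨p, A', hE⟩ | ⟨p, q, B', C', hE⟩ <;> simp at hE
  | starR Ps A h ih => intro _ hG; cases hG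
  | nablaL Γ Δ A B h ih =>
    intro hL _
    rcases hL (Fm.nabla A) (by simp) with ⟨p, A', hE⟩ | ⟨p, q, B', C', hE⟩ <;> simp at hE
  | nablaR A B h ih => intro _ hG; cases hG
  | nablaP1 Γ Pi Δ A B h ih =>
    intro hL _
    rcases hL (Fm.nabla A) (by simp) with ⟨p, A', hE⟩ | ⟨p, q, B', C', hE⟩ <;> simp at hE
  | nablaP2 Γ Pi Δ A B h ih =>
    intro hL _
    rcases hL (Fm.nabla A) (by simp) with ⟨p, A', hE⟩ | ⟨p, q, B', C', hE⟩ <;> simp at hE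

/-- A formula that is neither an `and` (in the right way), primitive, nor locked
    cannot occur in `Γ ++ (A∧B) :: Ψ` with `Γ` primitive and `Ψ` locked. -/
lemma no_bad {Γ' Δ' Γ Ψ : List Fm} {X A B : Fm}
    (hΓ : PrimSeq Γ) (hΨ : LockedSeq Ψ)
    (hne1 : ∀ p, X ≠ Fm.atom p)
    (hne2 : X ≠ Fm.and A B)
    (hne3 : ¬ Locked X)
    (hEq : Γ' ++ X :: Δ' = Γ ++ Fm.and A B :: Ψ) : False := by
  rcases split_mid hEq with ⟨-, h, -⟩ | ⟨t, h1, h2⟩ | ⟨t, h1, h2⟩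
  · exact hne2 h
  · exact hne3 (hΨ X (by rw [h2]; simp))
  · obtain ⟨p, hp⟩ := hΓ X (by rw [h1]; simp)
    exact hne1 p hp

/-- Key inversion lemma: with primitive `Γ`, locked `Ψ` and good succedent,
    a conjunction in the middle can be replaced by one of its conjuncts. -/
lemma key : ∀ {S : List Fm} {C : Fm}, Deriv S C →
    ∀ Γ Ψ A B, PrimSeq Γ → LockedSeq Ψ → Good C → S = Γ ++ Fm.and A B :: Ψ →
    Deriv (Γ ++ A :: Ψ) C ∨ Deriv (Γ ++ B :: Ψ) C := by
  intro S C h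
  induction h with
  | ax A' =>
    intro Γ Ψ A B hΓ hΨ hG hEq
    cases Γ with
    | nil =>
      obtain ⟨rfl, rfl⟩ : A' = Fm.and A B ∧ Ψ = [] := by simpa using hEq
      cases hG
    | cons g Γ' => simp at hEq
  | lDivL Γ₁ Pi Δ₁ A₁ B₁ C₁ h1 h2 ih1 ih2 =>
    intro Γ Ψ A B hΓ hΨ hG hEq
    have hEq' : (Γ₁ ++ Pi) ++ Fm.lDiv B₁ A₁ :: Δ₁ = Γ ++ Fm.and A B :: Ψ := by
      simp only [List.append_assoc, List.singleton_append] at hEq ⊢; exact hEq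
    rcases split_mid hEq' with ⟨-, h', -⟩ | ⟨t, h1', h2'⟩ | ⟨t, h1', h2'⟩
    · simp at h'
    · -- the lDiv is in Ψ, so it is locked of the first kind
      have hlock : Locked (Fm.lDiv B₁ A₁) := hΨ _ (by rw [h2']; simp)
      rcases hlock with ⟨p, A', hE⟩ | ⟨p, q, B', C', hE⟩
      · obtain ⟨hB, -⟩ := Fm.lDiv.inj hE.symm
        -- hB : B₁ = atom p
        rcases split_elem h1' with ⟨u, hu1, hu2⟩ | ⟨u, hu1, hu2⟩
        · -- occurrence in Γ₁, so Pi ⊆ Ψ is locked: impossible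
          exfalso
          refine locked_not_good h2 (fun F hF => hΨ F ?_) (hB ▸ Good.atom p)
          rw [h2', hu2]; simp [hF]
        · -- occurrence in Pi
          have hprim : PrimSeq u := fun F hF => hΓ F (by rw [hu1]; simp [hF])
          have hlocked : LockedSeq t := fun F hF => hΨ F (by rw [h2']; simp [hF])
          rcases ih2 u t A B hprim hlocked (hB ▸ Good.atom p) hu2 with hd | hd
          · left
            have := Deriv.lDivL Γ₁ (u ++ A :: t) Δ₁ A₁ B₁ C₁ h1 hd
            rw [hu1, h2']
            simpa using this
          · right
            have := Deriv.lDivL Γ₁ (u ++ B :: t) Δ₁ A₁ B₁ C₁ h1 hd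
            rw [hu1, h2']
            simpa using this
      · simp at hE
    · -- lDiv in Γ: impossible
      obtain ⟨p, hp⟩ := hΓ _ (show Fm.lDiv B₁ A₁ ∈ Γ by rw [h1']; simp)
      simp at hp
  | lDivR Pi A₁ B₁ h ih => intro Γ Ψ A B hΓ hΨ hG hEq; cases hG
  | rDivL Γ₁ Pi Δ₁ A₁ B₁ C₁ h1 h2 ih1 ih2 =>
    intro Γ Ψ A B hΓ hΨ hG hEq
    exact absurd (by simp only [List.append_assoc, List.singleton_append] at hEq ⊢; exact hEq)
      (fun h' => no_bad hΓ hΨ (by simp) (by simp) (by simp [Locked]) h')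
  | rDivR Pi A₁ B₁ h ih => intro Γ Ψ A B hΓ hΨ hG hEq; cases hG
  | mulL Γ₁ Δ₁ A₁ B₁ C₁ h ih =>
    intro Γ Ψ A B hΓ hΨ hG hEq
    exact absurd (by simp only [List.append_assoc, List.singleton_append] at hEq ⊢; exact hEq)
      (fun h' => no_bad (X := Fm.mul A₁ B₁) hΓ hΨ
        (by simp) (by simp) (by simp [Locked]) h')
  | mulR Γ₁ Δ₁ A₁ B₁ h1 h2 ih1 ih2 =>
    intro Γ Ψ A B hΓ hΨ hG hEq
    cases hG with
    | mul g1 g2 =>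
      rcases split_elem hEq with ⟨t, h1', h2'⟩ | ⟨t, h1', h2'⟩
      · -- occurrence in Γ₁
        have hlocked : LockedSeq t := fun F hF => hΨ F (by rw [h2']; simp [hF])
        rcases ih1 Γ t A B hΓ hlocked g1 h1' with hd | hd
        · left; have := Deriv.mulR _ _ _ _ hd h2; rw [h2']; simpa using this
        · right; have := Deriv.mulR _ _ _ _ hd h2; rw [h2']; simpa using this
      · -- occurrence in Δ₁
        have hprim : PrimSeq t := fun F hF => hΓ F (by rw [h1']; simp [hF])
        rcases ih2 t Ψ A B hprim hΨ g2 h2' with hd | hd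
        · left; have := Deriv.mulR _ _ _ _ h1 hd; rw [h1']; simpa using this
        · right; have := Deriv.mulR _ _ _ _ h1 hd; rw [h1']; simpa using this
  | andL1 Γ₁ Δ₁ A₁ A₂ C₁ h ih =>
    intro Γ Ψ A B hΓ hΨ hG hEq
    have hEq' : Γ₁ ++ Fm.and A₁ A₂ :: Δ₁ = Γ ++ Fm.and A B :: Ψ := by
      simp only [List.append_assoc, List.singleton_append] at hEq ⊢; exact hEq
    rcases split_mid hEq' with ⟨rfl, h', rfl⟩ | ⟨t, h1', h2'⟩ | ⟨t, h1', h2'⟩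
    · obtain ⟨rfl, rfl⟩ := Fm.and.inj h'
      left; simpa using h
    · -- the and is in Ψ, locked of second kind
      have hlock : Locked (Fm.and A₁ A₂) := hΨ _ (by rw [h2']; simp)
      rcases hlock with ⟨p, A', hE⟩ | ⟨p, q, B', C', hE⟩
      · simp at hE
      · obtain ⟨hA1, hA2⟩ := Fm.and.inj hE.symm
        have hlocked : LockedSeq (t ++ A₁ :: Δ₁) := by
          intro F hF
          simp only [List.mem_append, List.mem_cons] at hF
          rcases hF with h'' | h'' | h''
          · exact hΨ F (by rw [h2']; simp [h''])
          · exact Or.inl ⟨p, B', by rw [h'', hA1]⟩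
          · exact hΨ F (by rw [h2']; simp [h''])
        have hEq2 : Γ₁ ++ [A₁] ++ Δ₁ = Γ ++ Fm.and A B :: (t ++ A₁ :: Δ₁) := by
          rw [h1']; simp
        rcases ih Γ (t ++ A₁ :: Δ₁) A B hΓ hlocked hG hEq2 with hd | hd
        · left
          have := Deriv.andL1 (Γ ++ A :: t) Δ₁ A₁ A₂ C₁ (by simpa using hd)
          rw [h2']; simpa using this
        · right
          have := Deriv.andL1 (Γ ++ B :: t) Δ₁ A₁ A₂ C₁ (by simpa using hd)
          rw [h2']; simpa using this
    · obtain ⟨p, hp⟩ := hΓ _ (show Fm.and A₁ A₂ ∈ Γ by rw [h1']; simp)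
      simp at hp
  | andL2 Γ₁ Δ₁ A₁ A₂ C₁ h ih =>
    intro Γ Ψ A B hΓ hΨ hG hEq
    have hEq' : Γ₁ ++ Fm.and A₁ A₂ :: Δ₁ = Γ ++ Fm.and A B :: Ψ := by
      simp only [List.append_assoc, List.singleton_append] at hEq ⊢; exact hEq
    rcases split_mid hEq' with ⟨rfl, h', rfl⟩ | ⟨t, h1', h2'⟩ | ⟨t, h1', h2'⟩
    · obtain ⟨rfl, rfl⟩ := Fm.and.inj h'
      right; simpa using h
    · have hlock : Locked (Fm.and A₁ A₂) := hΨ _ (by rw [h2']; simp)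
      rcases hlock with ⟨p, A', hE⟩ | ⟨p, q, B', C', hE⟩
      · simp at hE
      · obtain ⟨hA1, hA2⟩ := Fm.and.inj hE.symm
        have hlocked : LockedSeq (t ++ A₂ :: Δ₁) := by
          intro F hF
          simp only [List.mem_append, List.mem_cons] at hF
          rcases hF with h'' | h'' | h''
          · exact hΨ F (by rw [h2']; simp [h''])
          · exact Or.inl ⟨q, C', by rw [h'', hA2]⟩
          · exact hΨ F (by rw [h2']; simp [h''])
        have hEq2 : Γ₁ ++ [A₂] ++ Δ₁ = Γ ++ Fm.and A B :: (t ++ A₂ :: Δ₁) := by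
          rw [h1']; simp
        rcases ih Γ (t ++ A₂ :: Δ₁) A B hΓ hlocked hG hEq2 with hd | hd
        · left
          have := Deriv.andL2 (Γ ++ A :: t) Δ₁ A₁ A₂ C₁ (by simpa using hd)
          rw [h2']; simpa using this
        · right
          have := Deriv.andL2 (Γ ++ B :: t) Δ₁ A₁ A₂ C₁ (by simpa using hd)
          rw [h2']; simpa using this
    · obtain ⟨p, hp⟩ := hΓ _ (show Fm.and A₁ A₂ ∈ Γ by rw [h1']; simp)
      simp at hp
  | andR Pi A₁ A₂ h1 h2 ih1 ih2 => intro Γ Ψ A B hΓ hΨ hG hEq; cases hG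
  | orL Γ₁ Δ₁ A₁ A₂ C₁ h1 h2 ih1 ih2 =>
    intro Γ Ψ A B hΓ hΨ hG hEq
    exact absurd (by simp only [List.append_assoc, List.singleton_append] at hEq ⊢; exact hEq)
      (fun h' => no_bad (X := Fm.or A₁ A₂) hΓ hΨ (by simp) (by simp) (by simp [Locked]) h')
  | orR1 Pi A₁ A₂ h ih => intro Γ Ψ A B hΓ hΨ hG hEq; cases hG
  | orR2 Pi A₁ A₂ h ih => intro Γ Ψ A B hΓ hΨ hG hEq; cases hG
  | zeroL Γ₁ Δ₁ C₁ =>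
    intro Γ Ψ A B hΓ hΨ hG hEq
    exact absurd (by simp only [List.append_assoc, List.singleton_append] at hEq ⊢; exact hEq)
      (fun h' => no_bad (X := Fm.zero) hΓ hΨ (by simp) (by simp) (by simp [Locked]) h')
  | oneL Γ₁ Δ₁ C₁ h ih =>
    intro Γ Ψ A B hΓ hΨ hG hEq
    exact absurd (by simp only [List.append_assoc, List.singleton_append] at hEq ⊢; exact hEq)
      (fun h' => no_bad (X := Fm.one) hΓ hΨ (by simp) (by simp) (by simp [Locked]) h')
  | oneR => intro Γ Ψ A B hΓ hΨ hG hEq; cases hG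
  | bangL n Γ₁ Δ₁ A₁ B₁ h ih =>
    intro Γ Ψ A B hΓ hΨ hG hEq
    exact absurd (by simp only [List.append_assoc, List.singleton_append] at hEq ⊢; exact hEq)
      (fun h' => no_bad (X := Fm.bang A₁) hΓ hΨ (by simp) (by simp) (by simp [Locked]) h')
  | bangR A₁ B₁ h ih => intro Γ Ψ A B hΓ hΨ hG hEq; cases hG
  | starL Γ₁ Δ₁ A₁ B₁ h ih =>
    intro Γ Ψ A B hΓ hΨ hG hEq
    exact absurd (by simp only [List.append_assoc, List.singleton_append] at hEq ⊢; exact hEq)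
      (fun h' => no_bad (X := Fm.star A₁) hΓ hΨ (by simp) (by simp) (by simp [Locked]) h')
  | starR Ps A₁ h ih => intro Γ Ψ A B hΓ hΨ hG hEq; cases hG
  | nablaL Γ₁ Δ₁ A₁ B₁ h ih =>
    intro Γ Ψ A B hΓ hΨ hG hEq
    exact absurd (by simp only [List.append_assoc, List.singleton_append] at hEq ⊢; exact hEq)
      (fun h' => no_bad (X := Fm.nabla A₁) hΓ hΨ (by simp) (by simp) (by simp [Locked]) h')
  | nablaR A₁ B₁ h ih => intro Γ Ψ A B hΓ hΨ hG hEq; cases hG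
  | nablaP1 Γ₁ Pi Δ₁ A₁ B₁ h ih =>
    intro Γ Ψ A B hΓ hΨ hG hEq
    exact absurd (by simp only [List.append_assoc, List.singleton_append] at hEq ⊢; exact hEq)
      (fun h' => no_bad (X := Fm.nabla A₁) (Γ' := Γ₁) (Δ' := Pi ++ Δ₁) hΓ hΨ
        (by simp) (by simp) (by simp [Locked]) h')
  | nablaP2 Γ₁ Pi Δ₁ A₁ B₁ h ih =>
    intro Γ Ψ A B hΓ hΨ hG hEq
    exact absurd (by simp only [List.append_assoc, List.singleton_append] at hEq ⊢; exact hEq)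
      (fun h' => no_bad (X := Fm.nabla A₁) (Γ' := Γ₁ ++ Pi) (Δ' := Δ₁) hΓ hΨ
        (by simp) (by simp) (by simp [Locked]) h')

lemma bigAnd_cons_cons (a b : Fm) (l : List Fm) :
    bigAnd (a :: b :: l) = Fm.and a (bigAnd (b :: l)) := rfl

lemma good_target : Good (Fm.mul aL okF) := Good.mul (Good.atom 0) (Good.atom 6)

lemma backward_dir (Γ Ψ : List Fm) (T : Fm) :
    ∀ (As : List Fm) (A : Fm), A ∈ As → Deriv (Γ ++ [A] ++ Ψ) T →
      Deriv (Γ ++ [bigAnd As] ++ Ψ) T := by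
  intro As
  induction As with
  | nil => intro A hA; simp at hA
  | cons a rest ih =>
    intro A hA hd
    rcases List.mem_cons.mp hA with rfl | hA'
    · cases rest with
      | nil => simpa [bigAnd] using hd
      | cons b l =>
        rw [bigAnd_cons_cons]
        exact Deriv.andL1 Γ Ψ _ _ _ hd
    · have hrest := ih A hA' hd
      cases rest with
      | nil => simp at hA'
      | cons b l =>
        rw [bigAnd_cons_cons]
        exact Deriv.andL2 Γ Ψ _ _ _ hrest

lemma forward_dir (Γ Ψ : List Fm) (hΓ : PrimSeq Γ) (hΨ : LockedSeq Ψ) :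
    ∀ (As : List Fm), As ≠ [] →
      Deriv (Γ ++ [bigAnd As] ++ Ψ) (Fm.mul aL okF) →
      ∃ A ∈ As, Deriv (Γ ++ [A] ++ Ψ) (Fm.mul aL okF) := by
  intro As
  induction As with
  | nil => intro h; exact absurd rfl h
  | cons a rest ih =>
    intro _ hd
    cases rest with
    | nil => exact ⟨a, by simp, by simpa [bigAnd] using hd⟩
    | cons b l =>
      rw [bigAnd_cons_cons] at hd
      rcases key hd Γ Ψ a (bigAnd (b :: l)) hΓ hΨ good_target (by simp) with hd' | hd'
      · exact ⟨a, by simp, by simpa using hd'⟩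
      · obtain ⟨A, hA, hdA⟩ := ih (by simp) (by simpa using hd')
        exact ⟨A, List.mem_cons_of_mem a hA, hdA⟩

theorem bigAnd_left_iff (Γ Ψ : List Fm) (hΓ : PrimSeq Γ) (hΨ : LockedSeq Ψ)
    (As : List Fm) (hAs : As ≠ []) :
    Deriv (Γ ++ [bigAnd As] ++ Ψ) (Fm.mul aL okF) ↔
    ∃ A ∈ As, Deriv (Γ ++ [A] ++ Ψ) (Fm.mul aL okF) := by
  constructor
  · exact forward_dir Γ Ψ hΓ hΨ As hAs
  · rintro ⟨A, hA, hd⟩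
    exact backward_dir Γ Ψ _ As A hA hd
end

section
/- For every sequence Ψ each of whose formulas is of the form (ok\ok)∧(p\B) with p primitive, the sequent a_L, ok, Ψ ⊢ a_L·ok is derivable in ACTωm. -/
set_option linter.unusedVariables false
set_option linter.unnecessarySeqFocus false
set_option maxHeartbeats 1000000

theorem okay_sequent_derivable (Ψ : List Fm)
    (hΨ : ∀ F ∈ Ψ, ∃ (p : ℕ) (B : Fm), F = Fm.and OKF (Fm.lDiv (Fm.atom p) B)) :
    Deriv (aL :: okF :: Ψ) (Fm.mul aL okF) := by
  have key : Deriv (okF :: Ψ) okF := by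
    induction Ψ using List.reverseRecOn with
    | nil => exact Deriv.ax okF
    | append_singleton Ψ' F ih =>
      obtain ⟨p, B, hF⟩ := hΨ F (by simp)
      have ih' := ih (fun G hG => hΨ G (by simp [hG]))
      subst hF
      have h1 := Deriv.andL1 (okF :: Ψ') [] OKF (Fm.lDiv (Fm.atom p) B) okF ?_
      · simpa using h1
      · have h2 := Deriv.lDivL [] (okF :: Ψ') [] okF okF okF (Deriv.ax okF) ih'
        simpa [OKF] using h2
  have := Deriv.mulR [aL] (okF :: Ψ) aL okF (Deriv.ax aL) key
  simpa using this
end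

section
/- Let Γ be a sequence of primitive formulas, let p be a primitive formula, let c ∈ ℕ, and let Ψ be a locked sequence of formulas. Then the sequent Γ, go, ([go]→p)^c, Ψ ⊢ a_L·ok (with c copies of [go]→p) is derivable in the fragment of ACTωm without 0, 1, / and ∨ if and only if Γ, p^c, go, Ψ ⊢ a_L·ok is derivable. -/
set_option linter.unusedVariables false
set_option linter.unnecessarySeqFocus false
set_option maxHeartbeats 1000000

section Aux13

/-- Cast a derivation along an antecedent equality. -/
lemma Deriv.cast {Δ Δ' : List Fm} {C : Fm} (h : Deriv Δ C) (e : Δ = Δ') : Deriv Δ' C := e ▸ h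

/-- The middle formula: `go` or `p·go`. -/
def M0 (p : ℕ) : Bool → Fm
  | true => Fm.mul (Fm.atom p) goF
  | false => goF

/-- The formula `[go]→p`. -/
def XA (p : ℕ) : Fm := Fm.lDiv goF (Fm.mul (Fm.atom p) goF)

lemma locked_XA (p : ℕ) : Locked (XA p) := Or.inl ⟨7, Fm.mul (Fm.atom p) goF, rfl⟩

/-- A locked antecedent never derives an atom. -/
lemma locked_no_atom : ∀ {Δ : List Fm} {C : Fm}, Deriv Δ C → LockedSeq Δ → ∀ q, C ≠ Fm.atom q := by
  intro Δ C h
  induction h with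
  | ax A =>
    intro hL q hq; subst hq
    have := hL (Fm.atom q) (by simp)
    simp [Locked] at this
  | lDivL Γ Pi Δ A B C h1 h2 ih1 ih2 =>
    intro hL q hq
    rcases hL (Fm.lDiv B A) (by simp) with ⟨b, A', hb⟩ | ⟨_, _, _, _, hb⟩
    · injection hb with hb1 hb2
      exact ih2 (fun F hF => hL F (by simp [hF])) b hb1
    · cases hb
  | lDivR Pi A B h ih => intro _ q hq; cases hq
  | rDivL Γ Pi Δ A B C h1 h2 ih1 ih2 =>
    intro hL q hq
    have := hL (Fm.rDiv A B) (by simp)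
    simp [Locked] at this
  | rDivR Pi A B h ih => intro _ q hq; cases hq
  | mulL Γ Δ A B C h ih =>
    intro hL q hq
    have := hL (Fm.mul A B) (by simp)
    simp [Locked] at this
  | mulR Γ Δ A B hA hB ihA ihB => intro _ q hq; cases hq
  | andL1 Γ Δ A₁ A₂ C h ih =>
    intro hL q hq
    rcases hL (Fm.and A₁ A₂) (by simp) with ⟨_, _, hb⟩ | ⟨a, b, B', C', hb⟩
    · cases hb
    · injection hb with hb1 hb2
      refine ih ?_ q hq
      intro F hF
      simp only [List.mem_append, List.mem_singleton] at hF
      rcases hF with (hF | hF) | hF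
      · exact hL F (by simp [hF])
      · subst hF; exact Or.inl ⟨a, B', hb1⟩
      · exact hL F (by simp [hF])
  | andL2 Γ Δ A₁ A₂ C h ih =>
    intro hL q hq
    rcases hL (Fm.and A₁ A₂) (by simp) with ⟨_, _, hb⟩ | ⟨a, b, B', C', hb⟩
    · cases hb
    · injection hb with hb1 hb2
      refine ih ?_ q hq
      intro F hF
      simp only [List.mem_append, List.mem_singleton] at hF
      rcases hF with (hF | hF) | hF
      · exact hL F (by simp [hF])
      · subst hF; exact Or.inl ⟨b, C', hb2⟩
      · exact hL F (by simp [hF])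
  | andR Pi A₁ A₂ h1 h2 ih1 ih2 => intro _ q hq; cases hq
  | orL Γ Δ A₁ A₂ C h1 h2 ih1 ih2 =>
    intro hL q hq
    have := hL (Fm.or A₁ A₂) (by simp)
    simp [Locked] at this
  | orR1 Pi A₁ A₂ h ih => intro _ q hq; cases hq
  | orR2 Pi A₁ A₂ h ih => intro _ q hq; cases hq
  | zeroL Γ Δ C =>
    intro hL q hq
    have := hL Fm.zero (by simp)
    simp [Locked] at this
  | oneL Γ Δ C h ih =>
    intro hL q hq
    have := hL Fm.one (by simp)
    simp [Locked] at this
  | oneR => intro _ q hq; cases hq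
  | bangL n Γ Δ A B h ih =>
    intro hL q hq
    have := hL (Fm.bang A) (by simp)
    simp [Locked] at this
  | bangR A B h ih => intro _ q hq; cases hq
  | starL Γ Δ A B h ih =>
    intro hL q hq
    have := hL (Fm.star A) (by simp)
    simp [Locked] at this
  | starR Ps A h ih => intro _ q hq; cases hq
  | nablaL Γ Δ A B h ih =>
    intro hL q hq
    have := hL (Fm.nabla A) (by simp)
    simp [Locked] at this
  | nablaR A B h ih => intro _ q hq; cases hq
  | nablaP1 Γ Pi Δ A B h ih =>
    intro hL q hq
    have := hL (Fm.nabla A) (by simp)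
    simp [Locked] at this
  | nablaP2 Γ Pi Δ A B h ih =>
    intro hL q hq
    have := hL (Fm.nabla A) (by simp)
    simp [Locked] at this

/-- A primitive antecedent deriving an atom must be that single atom. -/
lemma prim_atom : ∀ {Δ : List Fm} {C : Fm}, Deriv Δ C → PrimSeq Δ → ∀ q, C = Fm.atom q →
    Δ = [Fm.atom q] := by
  intro Δ C h
  induction h with
  | ax A => intro hP q hq; rw [hq]
  | lDivL Γ Pi Δ A B C h1 h2 ih1 ih2 =>
    intro hP q hq
    obtain ⟨n, hn⟩ := hP (Fm.lDiv B A) (by simp); cases hn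
  | lDivR Pi A B h ih => intro _ q hq; cases hq
  | rDivL Γ Pi Δ A B C h1 h2 ih1 ih2 =>
    intro hP q hq
    obtain ⟨n, hn⟩ := hP (Fm.rDiv A B) (by simp); cases hn
  | rDivR Pi A B h ih => intro _ q hq; cases hq
  | mulL Γ Δ A B C h ih =>
    intro hP q hq
    obtain ⟨n, hn⟩ := hP (Fm.mul A B) (by simp); cases hn
  | mulR Γ Δ A B hA hB ihA ihB => intro _ q hq; cases hq
  | andL1 Γ Δ A₁ A₂ C h ih =>
    intro hP q hq
    obtain ⟨n, hn⟩ := hP (Fm.and A₁ A₂) (by simp); cases hn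
  | andL2 Γ Δ A₁ A₂ C h ih =>
    intro hP q hq
    obtain ⟨n, hn⟩ := hP (Fm.and A₁ A₂) (by simp); cases hn
  | andR Pi A₁ A₂ h1 h2 ih1 ih2 => intro _ q hq; cases hq
  | orL Γ Δ A₁ A₂ C h1 h2 ih1 ih2 =>
    intro hP q hq
    obtain ⟨n, hn⟩ := hP (Fm.or A₁ A₂) (by simp); cases hn
  | orR1 Pi A₁ A₂ h ih => intro _ q hq; cases hq
  | orR2 Pi A₁ A₂ h ih => intro _ q hq; cases hq
  | zeroL Γ Δ C =>
    intro hP q hq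
    obtain ⟨n, hn⟩ := hP Fm.zero (by simp); cases hn
  | oneL Γ Δ C h ih =>
    intro hP q hq
    obtain ⟨n, hn⟩ := hP Fm.one (by simp); cases hn
  | oneR => intro _ q hq; cases hq
  | bangL n Γ Δ A B h ih =>
    intro hP q hq
    obtain ⟨n', hn⟩ := hP (Fm.bang A) (by simp); cases hn
  | bangR A B h ih => intro _ q hq; cases hq
  | starL Γ Δ A B h ih =>
    intro hP q hq
    obtain ⟨n, hn⟩ := hP (Fm.star A) (by simp); cases hn
  | starR Ps A h ih => intro _ q hq; cases hq
  | nablaL Γ Δ A B h ih =>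
    intro hP q hq
    obtain ⟨n, hn⟩ := hP (Fm.nabla A) (by simp); cases hn
  | nablaR A B h ih => intro _ q hq; cases hq
  | nablaP1 Γ Pi Δ A B h ih =>
    intro hP q hq
    obtain ⟨n, hn⟩ := hP (Fm.nabla A) (by simp); cases hn
  | nablaP2 Γ Pi Δ A B h ih =>
    intro hP q hq
    obtain ⟨n, hn⟩ := hP (Fm.nabla A) (by simp); cases hn

lemma locate (x : Fm) : ∀ (A : List Fm) (s t B : List Fm), s ++ x :: t = A ++ B →
    (∃ u, A = s ++ x :: u ∧ t = u ++ B) ∨ (∃ u, s = A ++ u ∧ B = u ++ x :: t) := by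
  intro A
  induction A with
  | nil =>
    intro s t B h
    right
    exact ⟨s, rfl, by simpa using h.symm⟩
  | cons a A ih =>
    intro s t B h
    cases s with
    | nil =>
      rw [List.nil_append, List.cons_append] at h
      injection h with h1 h2
      exact Or.inl ⟨A, by simp [h1], h2⟩
    | cons b s =>
      rw [List.cons_append, List.cons_append] at h
      injection h with h1 h2
      subst h1
      rcases ih s t B h2 with ⟨u, hu1, hu2⟩ | ⟨u, hu1, hu2⟩
      · exact Or.inl ⟨u, by simp [hu1], hu2⟩
      · exact Or.inr ⟨u, by simp [hu1], hu2⟩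

lemma split2 : ∀ (A : List Fm) (s t B : List Fm), s ++ t = A ++ B →
    (∃ u, A = s ++ u ∧ t = u ++ B) ∨ (∃ u, s = A ++ u ∧ B = u ++ t) := by
  intro A
  induction A with
  | nil =>
    intro s t B h
    right
    exact ⟨s, rfl, by simpa using h.symm⟩
  | cons a A ih =>
    intro s t B h
    cases s with
    | nil =>
      left
      exact ⟨a :: A, rfl, by simpa using h⟩
    | cons b s =>
      rw [List.cons_append, List.cons_append] at h
      injection h with h1 h2
      subst h1
      rcases ih s t B h2 with ⟨u, hu1, hu2⟩ | ⟨u, hu1, hu2⟩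
      · exact Or.inl ⟨u, by simp [hu1], hu2⟩
      · exact Or.inr ⟨u, by simp [hu1], hu2⟩

lemma rep_split {x : Fm} {c : ℕ} {s t : List Fm} (h : List.replicate c x = s ++ t) :
    s = List.replicate s.length x ∧ t = List.replicate t.length x ∧ s.length + t.length = c := by
  refine ⟨?_, ?_, ?_⟩
  · refine List.eq_replicate_of_mem (fun b hb => ?_)
    have hb' : b ∈ List.replicate c x := by rw [h]; exact List.mem_append_left _ hb
    exact List.eq_of_mem_replicate hb'
  · refine List.eq_replicate_of_mem (fun b hb => ?_)
    have hb' : b ∈ List.replicate c x := by rw [h]; exact List.mem_append_right _ hb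
    exact List.eq_of_mem_replicate hb'
  · have := congrArg List.length h
    simp at this
    omega

lemma rep_split_mid {x y : Fm} {c : ℕ} {s t : List Fm} (h : List.replicate c x = s ++ y :: t) :
    y = x ∧ s = List.replicate s.length x ∧ t = List.replicate t.length x ∧
      s.length + 1 + t.length = c := by
  obtain ⟨hs, ht, hlen⟩ := rep_split h
  have hy : y = x := by
    have : y ∈ List.replicate c x := by rw [h]; simp
    exact List.eq_of_mem_replicate this
  have ht' : t = List.replicate t.length x := by
    refine List.eq_replicate_of_mem (fun b hb => ?_)
    have hb' : b ∈ List.replicate c x := by rw [h]; simp [hb]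
    exact List.eq_of_mem_replicate hb'
  refine ⟨hy, hs, ht', ?_⟩
  have := congrArg List.length h
  simp at this
  omega

lemma suffixShape (M : Fm) (Γ' s t R : List Fm) (h : s ++ t = Γ' ++ M :: R) :
    (∃ Γ₁ Γ₂, Γ' = Γ₁ ++ Γ₂ ∧ s = Γ₁ ∧ t = Γ₂ ++ M :: R) ∨
    (∃ R₁ R₂, R = R₁ ++ R₂ ∧ s = Γ' ++ M :: R₁ ∧ t = R₂) := by
  rcases split2 Γ' s t (M :: R) h with ⟨u, hu1, hu2⟩ | ⟨u, hu1, hu2⟩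
  · exact Or.inl ⟨s, u, hu1, rfl, hu2⟩
  · cases u with
    | nil => exact Or.inl ⟨Γ', [], by simp, by simpa using hu1, by simpa using hu2.symm⟩
    | cons m u =>
      rw [List.cons_append] at hu2
      injection hu2 with h1 h2
      exact Or.inr ⟨u, t, h2, by rw [hu1, h1], rfl⟩

lemma locate4 (p : ℕ) (e : Bool) {s t Γ Θ : List Fm} {c : ℕ} {x : Fm}
    (h : s ++ x :: t = Γ ++ M0 p e :: (List.replicate c (XA p) ++ Θ)) :
    (∃ u, Γ = s ++ x :: u) ∨
    (x = M0 p e ∧ s = Γ ∧ t = List.replicate c (XA p) ++ Θ) ∨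
    (∃ i j, x = XA p ∧ i + 1 + j = c ∧ s = Γ ++ M0 p e :: List.replicate i (XA p) ∧
      t = List.replicate j (XA p) ++ Θ) ∨
    (∃ Θ₁ Θ₂, Θ = Θ₁ ++ x :: Θ₂ ∧ s = Γ ++ M0 p e :: (List.replicate c (XA p) ++ Θ₁) ∧ t = Θ₂) := by
  rcases locate x Γ s t _ h with ⟨u, hu1, hu2⟩ | ⟨u, hu1, hu2⟩
  · exact Or.inl ⟨u, hu1⟩
  · cases u with
    | nil =>
      rw [List.nil_append] at hu2
      injection hu2 with h1 h2
      exact Or.inr (Or.inl ⟨h1.symm, by simpa using hu1, h2.symm⟩)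
    | cons m u =>
      rw [List.cons_append] at hu2
      injection hu2 with h1 h2
      rcases locate x (List.replicate c (XA p)) u t Θ h2.symm with ⟨v, hv1, hv2⟩ | ⟨v, hv1, hv2⟩
      · obtain ⟨hx, hsu, hsv, hlen⟩ := rep_split_mid hv1
        refine Or.inr (Or.inr (Or.inl ⟨u.length, v.length, hx, ?_, ?_, ?_⟩))
        · omega
        · rw [hu1, h1, ← hsu]
        · rw [hv2, ← hsv]
      · exact Or.inr (Or.inr (Or.inr ⟨v, t, hv2, by rw [hu1, h1, hv1], rfl⟩))

lemma mem_class (p : ℕ) (e : Bool) {c : ℕ} {Γ Θ : List Fm} (hΓ : PrimSeq Γ) (hΘ : LockedSeq Θ)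
    {F : Fm} (hF : F ∈ Γ ++ [M0 p e] ++ List.replicate c (XA p) ++ Θ) :
    (∃ n, F = Fm.atom n) ∨ (∃ A B, F = Fm.mul A B) ∨ (∃ A B, F = Fm.lDiv A B) ∨
      (∃ A B, F = Fm.and A B) := by
  simp only [List.append_assoc, List.mem_append, List.mem_singleton, List.mem_replicate] at hF
  rcases hF with hF | (hF | (hF | hF))
  · exact Or.inl (hΓ F hF)
  · subst hF
    cases e
    · exact Or.inl ⟨7, rfl⟩
    · exact Or.inr (Or.inl ⟨_, _, rfl⟩)
  · exact Or.inr (Or.inr (Or.inl ⟨_, _, hF.2⟩))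
  · rcases hΘ F hF with ⟨q, A, h⟩ | ⟨q, r, A, B, h⟩
    · exact Or.inr (Or.inr (Or.inl ⟨_, _, h⟩))
    · exact Or.inr (Or.inr (Or.inr ⟨_, _, h⟩))

lemma primSeq_target (p : ℕ) {Γ : List Fm} (hΓ : PrimSeq Γ) (k : ℕ) :
    PrimSeq (Γ ++ List.replicate k (Fm.atom p) ++ [goF] ++ []) := by
  intro F hF
  simp only [List.append_assoc, List.mem_append, List.mem_singleton, List.mem_replicate,
    List.append_nil] at hF
  rcases hF with hF | (hF | hF)
  · exact hΓ F hF
  · exact ⟨p, hF.2⟩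
  · exact ⟨7, hF⟩

end Aux13
section Main13

/-- Main invariant lemma for Statement 13 (the "only if" direction). -/
lemma main13 (p : ℕ) : ∀ {Δ : List Fm} {C : Fm}, Deriv Δ C →
    ∀ (Γ Θ : List Fm) (c : ℕ) (e : Bool), PrimSeq Γ → LockedSeq Θ →
      ((∃ q, C = Fm.atom q) ∨ ∃ a b, C = Fm.mul (Fm.atom a) (Fm.atom b)) →
      Δ = Γ ++ [M0 p e] ++ List.replicate c (XA p) ++ Θ →
      Deriv (Γ ++ List.replicate (c + cond e 1 0) (Fm.atom p) ++ [goF] ++ Θ) C := by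
  intro Δ C h
  induction h with
  | ax A =>
    intro Γ Θ c e hΓ hΘ hK hEq
    have hlen := congrArg List.length hEq
    simp at hlen
    have hΓ0 : Γ = [] := List.length_eq_zero_iff.mp (by omega)
    have hΘ0 : Θ = [] := List.length_eq_zero_iff.mp (by omega)
    have hc : c = 0 := by omega
    subst hΓ0; subst hΘ0; subst hc
    simp at hEq
    subst hEq
    cases e
    · exact Deriv.cast (Deriv.ax goF) (by simp [M0])
    · exact Deriv.cast (Deriv.mulR [Fm.atom p] [goF] _ _ (Deriv.ax _) (Deriv.ax _)) (by simp [M0])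
  | lDivL Γr Pi Δr A B C h1 h2 ih1 ih2 =>
    intro Γ Θ c e hΓ hΘ hK hEq
    have hEq' : (Γr ++ Pi) ++ Fm.lDiv B A :: Δr =
        Γ ++ M0 p e :: (List.replicate c (XA p) ++ Θ) := by simpa using hEq
    rcases locate4 p e hEq' with ⟨u, hu1⟩ | ⟨hx, hs, ht⟩ |
      ⟨i, j, hx, hc, hs, ht⟩ | ⟨Θ₁, Θ₂, hΘ12, hs, ht⟩
    · obtain ⟨n, hn⟩ := hΓ (Fm.lDiv B A) (by rw [hu1]; simp)
      cases hn
    · cases e <;> simp [M0, goF] at hx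
    · simp only [XA, Fm.lDiv.injEq] at hx
      obtain ⟨hB, hA⟩ := hx
      subst hB; subst hA
      rcases suffixShape (M0 p e) Γ Γr Pi (List.replicate i (XA p)) hs with
        ⟨Γ₁, Γ₂, hΓ12, hΓr, hPi⟩ | ⟨R₁, R₂, hR, hΓr, hPi⟩
      · have hΓ₂ : PrimSeq Γ₂ := fun F hF => hΓ F (by rw [hΓ12]; simp [hF])
        have D2 := ih2 Γ₂ [] i e hΓ₂ (by intro F hF; simp at hF) (Or.inl ⟨7, rfl⟩)
          (by simp [hPi])
        have hD2eq := prim_atom D2 (primSeq_target p hΓ₂ (i + cond e 1 0)) 7 rfl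
        have hlen := congrArg List.length hD2eq
        simp at hlen
        have hcond : cond e 1 0 = 0 := by omega
        have he : e = false := by
          cases e
          · rfl
          · simp at hcond
        subst he
        have hΓ₂0 : Γ₂ = [] := List.length_eq_zero_iff.mp (by omega)
        have hi : i = 0 := by omega
        subst hΓ₂0; subst hi
        have hΓΓ : Γ = Γ₁ := by simpa using hΓ12
        subst hΓΓ
        have hcc : c = j + 1 := by omega
        subst hcc
        have D1 := ih1 Γr Θ j true (by rw [hΓr]; exact hΓ) hΘ hK (by simp [ht, M0])
        exact Deriv.cast D1 (by rw [hΓr]; simp)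
      · exfalso
        have hPiL : LockedSeq Pi := by
          intro F hF
          have hF' : F ∈ List.replicate i (XA p) := by
            rw [hR]; exact List.mem_append_right _ (by rwa [← hPi])
          rw [List.eq_of_mem_replicate hF']
          exact locked_XA p
        exact locked_no_atom h2 hPiL 7 rfl
    · rcases hΘ (Fm.lDiv B A) (by rw [hΘ12]; simp) with ⟨b, A', hb⟩ | ⟨_, _, _, _, hb⟩
      swap
      · cases hb
      injection hb with hb1 hb2
      subst hb1; subst hb2
      rcases suffixShape (M0 p e) Γ Γr Pi (List.replicate c (XA p) ++ Θ₁) hs with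
        ⟨Γ₁, Γ₂, hΓ12, hΓr, hPi⟩ | ⟨R₁, R₂, hR, hΓr, hPi⟩
      · have hΓ₂ : PrimSeq Γ₂ := fun F hF => hΓ F (by rw [hΓ12]; simp [hF])
        have hΘ₁ : LockedSeq Θ₁ := fun F hF => hΘ F (by rw [hΘ12]; simp [hF])
        have D2 := ih2 Γ₂ Θ₁ c e hΓ₂ hΘ₁ (Or.inl ⟨b, rfl⟩) (by simp [hPi])
        refine Deriv.cast (Deriv.lDivL Γ₁
          (Γ₂ ++ List.replicate (c + cond e 1 0) (Fm.atom p) ++ [goF] ++ Θ₁) Θ₂ A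
          (Fm.atom b) C ?_ ?_) ?_
        · exact Deriv.cast h1 (by rw [hΓr, ht])
        · exact D2
        · rw [hΓ12, hΘ12]; simp
      · exfalso
        have hPiL : LockedSeq Pi := by
          intro F hF
          have hF' : F ∈ List.replicate c (XA p) ++ Θ₁ := by
            rw [hR]; exact List.mem_append_right _ (by rwa [← hPi])
          rcases List.mem_append.mp hF' with hF' | hF'
          · rw [List.eq_of_mem_replicate hF']; exact locked_XA p
          · exact hΘ F (by rw [hΘ12]; simp [hF'])
        exact locked_no_atom h2 hPiL b rfl
  | lDivR Pi A B h ih =>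
    intro Γ Θ c e hΓ hΘ hK hEq; rcases hK with ⟨q, hq⟩ | ⟨a, b, hq⟩ <;> cases hq
  | rDivL Γr Pi Δr A B C h1 h2 ih1 ih2 =>
    intro Γ Θ c e hΓ hΘ hK hEq
    exfalso
    have hF : Fm.rDiv A B ∈ Γ ++ [M0 p e] ++ List.replicate c (XA p) ++ Θ := by
      rw [← hEq]; simp
    rcases mem_class p e hΓ hΘ hF with ⟨n, h'⟩ | ⟨_, _, h'⟩ | ⟨_, _, h'⟩ | ⟨_, _, h'⟩ <;> cases h'
  | rDivR Pi A B h ih =>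
    intro Γ Θ c e hΓ hΘ hK hEq; rcases hK with ⟨q, hq⟩ | ⟨a, b, hq⟩ <;> cases hq
  | mulL Γr Δr A B C h ih =>
    intro Γ Θ c e hΓ hΘ hK hEq
    have hEq' : Γr ++ Fm.mul A B :: Δr =
        Γ ++ M0 p e :: (List.replicate c (XA p) ++ Θ) := by simpa using hEq
    rcases locate4 p e hEq' with ⟨u, hu1⟩ | ⟨hx, hs, ht⟩ |
      ⟨i, j, hx, hc, hs, ht⟩ | ⟨Θ₁, Θ₂, hΘ12, hs, ht⟩
    · obtain ⟨n, hn⟩ := hΓ (Fm.mul A B) (by rw [hu1]; simp)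
      cases hn
    · cases e
      · simp [M0, goF] at hx
      · simp only [M0, Fm.mul.injEq] at hx
        obtain ⟨hA, hB⟩ := hx
        subst hA; subst hB; subst hs
        have D := ih (Γr ++ [Fm.atom p]) Θ c false
          (by intro F hF; simp at hF; rcases hF with hF | hF;
              · exact hΓ F hF
              · exact ⟨p, hF⟩)
          hΘ hK (by simp [ht, M0])
        exact Deriv.cast D (by simp [List.replicate_succ])
    · simp [XA] at hx
    · rcases hΘ (Fm.mul A B) (by rw [hΘ12]; simp) with ⟨_, _, hb⟩ | ⟨_, _, _, _, hb⟩ <;> cases hb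
  | mulR Γ₁r Γ₂r A B hA hB ihA ihB =>
    intro Γ Θ c e hΓ hΘ hK hEq
    rcases hK with ⟨q, hq⟩ | ⟨a, b, hq⟩
    · cases hq
    injection hq with hA' hB'
    subst hA'; subst hB'
    rcases suffixShape (M0 p e) Γ Γ₁r Γ₂r (List.replicate c (XA p) ++ Θ)
        (by simpa using hEq) with ⟨Γ₁, Γ₂, hΓ12, h1, h2⟩ | ⟨R₁, R₂, hR, h1, h2⟩
    · have hΓ₁ : PrimSeq Γ₁ := fun F hF => hΓ F (by rw [hΓ12]; simp [hF])
      have hΓ₂ : PrimSeq Γ₂ := fun F hF => hΓ F (by rw [hΓ12]; simp [hF])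
      have hΓ₁eq := prim_atom hA (by rw [h1]; exact hΓ₁) a rfl
      have D := ihB Γ₂ Θ c e hΓ₂ hΘ (Or.inl ⟨b, rfl⟩) (by simpa using h2)
      refine Deriv.cast (Deriv.mulR [Fm.atom a]
        (Γ₂ ++ List.replicate (c + cond e 1 0) (Fm.atom p) ++ [goF] ++ Θ) _ _
        (Deriv.ax _) D) ?_
      rw [hΓ12, ← h1, hΓ₁eq]; simp
    · exfalso
      have hL : LockedSeq Γ₂r := by
        intro F hF
        have hF' : F ∈ List.replicate c (XA p) ++ Θ := by
          rw [hR]; exact List.mem_append_right _ (by rwa [← h2])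
        rcases List.mem_append.mp hF' with hF' | hF'
        · rw [List.eq_of_mem_replicate hF']; exact locked_XA p
        · exact hΘ F hF'
      exact locked_no_atom hB hL b rfl
  | andL1 Γr Δr A₁ A₂ C h ih =>
    intro Γ Θ c e hΓ hΘ hK hEq
    have hEq' : Γr ++ Fm.and A₁ A₂ :: Δr =
        Γ ++ M0 p e :: (List.replicate c (XA p) ++ Θ) := by simpa using hEq
    rcases locate4 p e hEq' with ⟨u, hu1⟩ | ⟨hx, hs, ht⟩ |
      ⟨i, j, hx, hc, hs, ht⟩ | ⟨Θ₁, Θ₂, hΘ12, hs, ht⟩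
    · obtain ⟨n, hn⟩ := hΓ (Fm.and A₁ A₂) (by rw [hu1]; simp)
      cases hn
    · cases e <;> simp [M0, goF] at hx
    · simp [XA] at hx
    · rcases hΘ (Fm.and A₁ A₂) (by rw [hΘ12]; simp) with ⟨_, _, hb⟩ | ⟨q, r, B', C', hb⟩
      · cases hb
      injection hb with hb1 hb2
      have hL1 : Locked A₁ := Or.inl ⟨q, B', hb1⟩
      have D := ih Γ (Θ₁ ++ A₁ :: Θ₂) c e hΓ
        (by intro F hF; simp at hF
            rcases hF with hF | hF | hF
            · exact hΘ F (by rw [hΘ12]; simp [hF])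
            · subst hF; exact hL1
            · exact hΘ F (by rw [hΘ12]; simp [hF]))
        hK (by simp [hs, ht])
      refine Deriv.cast (Deriv.andL1
        (Γ ++ List.replicate (c + cond e 1 0) (Fm.atom p) ++ [goF] ++ Θ₁) Θ₂ A₁ A₂ C
        (Deriv.cast D (by simp))) ?_
      rw [hΘ12]; simp
  | andL2 Γr Δr A₁ A₂ C h ih =>
    intro Γ Θ c e hΓ hΘ hK hEq
    have hEq' : Γr ++ Fm.and A₁ A₂ :: Δr =
        Γ ++ M0 p e :: (List.replicate c (XA p) ++ Θ) := by simpa using hEq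
    rcases locate4 p e hEq' with ⟨u, hu1⟩ | ⟨hx, hs, ht⟩ |
      ⟨i, j, hx, hc, hs, ht⟩ | ⟨Θ₁, Θ₂, hΘ12, hs, ht⟩
    · obtain ⟨n, hn⟩ := hΓ (Fm.and A₁ A₂) (by rw [hu1]; simp)
      cases hn
    · cases e <;> simp [M0, goF] at hx
    · simp [XA] at hx
    · rcases hΘ (Fm.and A₁ A₂) (by rw [hΘ12]; simp) with ⟨_, _, hb⟩ | ⟨q, r, B', C', hb⟩
      · cases hb
      injection hb with hb1 hb2
      have hL2 : Locked A₂ := Or.inl ⟨r, C', hb2⟩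
      have D := ih Γ (Θ₁ ++ A₂ :: Θ₂) c e hΓ
        (by intro F hF; simp at hF
            rcases hF with hF | hF | hF
            · exact hΘ F (by rw [hΘ12]; simp [hF])
            · subst hF; exact hL2
            · exact hΘ F (by rw [hΘ12]; simp [hF]))
        hK (by simp [hs, ht])
      refine Deriv.cast (Deriv.andL2
        (Γ ++ List.replicate (c + cond e 1 0) (Fm.atom p) ++ [goF] ++ Θ₁) Θ₂ A₁ A₂ C
        (Deriv.cast D (by simp))) ?_
      rw [hΘ12]; simp
  | andR Pi A₁ A₂ h1 h2 ih1 ih2 =>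
    intro Γ Θ c e hΓ hΘ hK hEq; rcases hK with ⟨q, hq⟩ | ⟨a, b, hq⟩ <;> cases hq
  | orL Γr Δr A₁ A₂ C h1 h2 ih1 ih2 =>
    intro Γ Θ c e hΓ hΘ hK hEq
    exfalso
    have hF : Fm.or A₁ A₂ ∈ Γ ++ [M0 p e] ++ List.replicate c (XA p) ++ Θ := by
      rw [← hEq]; simp
    rcases mem_class p e hΓ hΘ hF with ⟨n, h'⟩ | ⟨_, _, h'⟩ | ⟨_, _, h'⟩ | ⟨_, _, h'⟩ <;> cases h'
  | orR1 Pi A₁ A₂ h ih =>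
    intro Γ Θ c e hΓ hΘ hK hEq; rcases hK with ⟨q, hq⟩ | ⟨a, b, hq⟩ <;> cases hq
  | orR2 Pi A₁ A₂ h ih =>
    intro Γ Θ c e hΓ hΘ hK hEq; rcases hK with ⟨q, hq⟩ | ⟨a, b, hq⟩ <;> cases hq
  | zeroL Γr Δr C =>
    intro Γ Θ c e hΓ hΘ hK hEq
    exfalso
    have hF : Fm.zero ∈ Γ ++ [M0 p e] ++ List.replicate c (XA p) ++ Θ := by
      rw [← hEq]; simp
    rcases mem_class p e hΓ hΘ hF with ⟨n, h'⟩ | ⟨_, _, h'⟩ | ⟨_, _, h'⟩ | ⟨_, _, h'⟩ <;> cases h'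
  | oneL Γr Δr C h ih =>
    intro Γ Θ c e hΓ hΘ hK hEq
    exfalso
    have hF : Fm.one ∈ Γ ++ [M0 p e] ++ List.replicate c (XA p) ++ Θ := by
      rw [← hEq]; simp
    rcases mem_class p e hΓ hΘ hF with ⟨n, h'⟩ | ⟨_, _, h'⟩ | ⟨_, _, h'⟩ | ⟨_, _, h'⟩ <;> cases h'
  | oneR =>
    intro Γ Θ c e hΓ hΘ hK hEq; rcases hK with ⟨q, hq⟩ | ⟨a, b, hq⟩ <;> cases hq
  | bangL n Γr Δr A B h ih =>
    intro Γ Θ c e hΓ hΘ hK hEq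
    exfalso
    have hF : Fm.bang A ∈ Γ ++ [M0 p e] ++ List.replicate c (XA p) ++ Θ := by
      rw [← hEq]; simp
    rcases mem_class p e hΓ hΘ hF with ⟨n', h'⟩ | ⟨_, _, h'⟩ | ⟨_, _, h'⟩ | ⟨_, _, h'⟩ <;> cases h'
  | bangR A B h ih =>
    intro Γ Θ c e hΓ hΘ hK hEq; rcases hK with ⟨q, hq⟩ | ⟨a, b, hq⟩ <;> cases hq
  | starL Γr Δr A B h ih =>
    intro Γ Θ c e hΓ hΘ hK hEq
    exfalso
    have hF : Fm.star A ∈ Γ ++ [M0 p e] ++ List.replicate c (XA p) ++ Θ := by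
      rw [← hEq]; simp
    rcases mem_class p e hΓ hΘ hF with ⟨n, h'⟩ | ⟨_, _, h'⟩ | ⟨_, _, h'⟩ | ⟨_, _, h'⟩ <;> cases h'
  | starR Ps A h ih =>
    intro Γ Θ c e hΓ hΘ hK hEq; rcases hK with ⟨q, hq⟩ | ⟨a, b, hq⟩ <;> cases hq
  | nablaL Γr Δr A B h ih =>
    intro Γ Θ c e hΓ hΘ hK hEq
    exfalso
    have hF : Fm.nabla A ∈ Γ ++ [M0 p e] ++ List.replicate c (XA p) ++ Θ := by
      rw [← hEq]; simp
    rcases mem_class p e hΓ hΘ hF with ⟨n, h'⟩ | ⟨_, _, h'⟩ | ⟨_, _, h'⟩ | ⟨_, _, h'⟩ <;> cases h'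
  | nablaR A B h ih =>
    intro Γ Θ c e hΓ hΘ hK hEq; rcases hK with ⟨q, hq⟩ | ⟨a, b, hq⟩ <;> cases hq
  | nablaP1 Γr Pi Δr A B h ih =>
    intro Γ Θ c e hΓ hΘ hK hEq
    exfalso
    have hF : Fm.nabla A ∈ Γ ++ [M0 p e] ++ List.replicate c (XA p) ++ Θ := by
      rw [← hEq]; simp
    rcases mem_class p e hΓ hΘ hF with ⟨n, h'⟩ | ⟨_, _, h'⟩ | ⟨_, _, h'⟩ | ⟨_, _, h'⟩ <;> cases h'
  | nablaP2 Γr Pi Δr A B h ih =>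
    intro Γ Θ c e hΓ hΘ hK hEq
    exfalso
    have hF : Fm.nabla A ∈ Γ ++ [M0 p e] ++ List.replicate c (XA p) ++ Θ := by
      rw [← hEq]; simp
    rcases mem_class p e hΓ hΘ hF with ⟨n, h'⟩ | ⟨_, _, h'⟩ | ⟨_, _, h'⟩ | ⟨_, _, h'⟩ <;> cases h'

/-- The "if" direction: moving the `p`'s back across `go`. -/
lemma back13 (p : ℕ) (Ψ : List Fm) (C : Fm) : ∀ (c : ℕ) (Γ : List Fm),
    Deriv (Γ ++ List.replicate c (Fm.atom p) ++ [goF] ++ Ψ) C →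
    Deriv (Γ ++ [goF] ++ List.replicate c (XA p) ++ Ψ) C := by
  intro c
  induction c with
  | zero => intro Γ h; simpa using h
  | succ c ih =>
    intro Γ h
    have h' := ih (Γ ++ [Fm.atom p]) (Deriv.cast h (by simp [List.replicate_succ]))
    have hm : Deriv (Γ ++ [Fm.mul (Fm.atom p) goF] ++ (List.replicate c (XA p) ++ Ψ)) C :=
      Deriv.mulL Γ (List.replicate c (XA p) ++ Ψ) _ _ _ (Deriv.cast h' (by simp))
    exact Deriv.cast (Deriv.lDivL Γ [goF] (List.replicate c (XA p) ++ Ψ)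
      (Fm.mul (Fm.atom p) goF) goF C hm (Deriv.ax goF)) (by simp [List.replicate_succ, XA])

end Main13
theorem go_arrow_iff (Γ Ψ : List Fm) (hΓ : PrimSeq Γ) (hΨ : LockedSeq Ψ)
    (p : ℕ) (c : ℕ) :
    Deriv (Γ ++ [goF] ++ List.replicate c (ra goF (Fm.atom p)) ++ Ψ) (Fm.mul aL okF) ↔
    Deriv (Γ ++ List.replicate c (Fm.atom p) ++ [goF] ++ Ψ) (Fm.mul aL okF) := by
  constructor
  · intro h
    have D := main13 p h Γ Ψ c false hΓ hΨ (Or.inr ⟨0, 6, rfl⟩)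
      (by simp [M0, XA, ra])
    exact Deriv.cast D (by simp)
  · intro h
    exact Deriv.cast (back13 p Ψ (Fm.mul aL okF) c Γ (Deriv.cast h (by simp)))
      (by simp [XA, ra])
end
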